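/- arXiv:1506.07101 — 8 statements merged into one kernel-verified Lean document; each statement's English description precedes it below -/
import Mathlib

section
/- Let X be a Hausdorff topological space and f₁,…,f_k : X → X continuous maps. If a nonempty compact set A ⊆ X is a strict attractor for the IFS, then: (i) A is a pointwise attractor; (ii) B(A) = B_p(A); and (iii) Fⁿ(K) converges to A in the Vietoris sense for every nonempty compact set K ⊆ B(A). -/
open Set Filter Topology

/-- The Hutchinson operator of the IFS generated by `f 0, …, f (k-1)`. -/
def Hutch {X : Type*} {k : ℕ} (f : Fin k → X → X) (S : Set X) : Set X :=
  ⋃ i, f i '' S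

/-- The semigroup generated by the maps `f 0, …, f (k-1)`: all finite (nonempty)
compositions. -/
def IFSsemigroup {X : Type*} {k : ℕ} (f : Fin k → X → X) : Set (X → X) :=
  {g | ∃ l : List (Fin k), l ≠ [] ∧ g = (l.map f).foldr (· ∘ ·) id}

/-- The Γ-orbit of a point. -/
def GammaOrbit {X : Type*} {k : ℕ} (f : Fin k → X → X) (x : X) : Set X :=
  {y | ∃ g ∈ IFSsemigroup f, g x = y}

/-- Convergence of a sequence of sets to a compact set `L` in the Vietoris sense. -/
def VTendsto {X : Type*} [TopologicalSpace X] (A : ℕ → Set X) (L : Set X) : Prop :=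
  ∀ U V : Set X, IsOpen U → L ⊆ U → IsOpen V → (V ∩ L).Nonempty →
    ∃ n₀ : ℕ, ∀ n ≥ n₀, A n ⊆ U ∧ (A n ∩ V).Nonempty

/-- The pointwise basin of a compact set `A`. -/
def BasinP {X : Type*} [TopologicalSpace X] {k : ℕ} (f : Fin k → X → X) (A : Set X) :
    Set X :=
  {x | VTendsto (fun n => (Hutch f)^[n] {x}) A}

/-- `A` is a pointwise attractor. -/
def IsPointwiseAttractor {X : Type*} [TopologicalSpace X] {k : ℕ}
    (f : Fin k → X → X) (A : Set X) : Prop :=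
  IsCompact A ∧ A.Nonempty ∧ ∃ U : Set X, IsOpen U ∧ A ⊆ U ∧ U ⊆ BasinP f A

/-- `A` is a strict attractor. -/
def IsStrictAttractor {X : Type*} [TopologicalSpace X] {k : ℕ}
    (f : Fin k → X → X) (A : Set X) : Prop :=
  IsCompact A ∧ A.Nonempty ∧ ∃ U : Set X, IsOpen U ∧ A ⊆ U ∧
    ∀ K : Set X, K.Nonempty → IsCompact K → K ⊆ U →
      VTendsto (fun n => (Hutch f)^[n] K) A

/-- The basin of a strict attractor: the union of all open neighborhoods witnessing
the attraction. -/
def BasinS {X : Type*} [TopologicalSpace X] {k : ℕ} (f : Fin k → X → X) (A : Set X) :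
    Set X :=
  ⋃₀ {U : Set X | IsOpen U ∧ A ⊆ U ∧
    ∀ K : Set X, K.Nonempty → IsCompact K → K ⊆ U →
      VTendsto (fun n => (Hutch f)^[n] K) A}

/-- `f_ω^n = f_{ω n-1} ∘ ⋯ ∘ f_{ω 0}` (the orbital branch corresponding to `ω`). -/
def FibIter {X : Type*} {k : ℕ} (f : Fin k → X → X) (ω : ℕ → Fin k) : ℕ → X → X
  | 0 => id
  | n + 1 => f (ω n) ∘ FibIter f ω n

/-- The tail `{f_ω^m x : m ≥ n}` of the ω-fiberwise orbit of `x`. -/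
def TailOrbit {X : Type*} {k : ℕ} (f : Fin k → X → X) (ω : ℕ → Fin k) (x : X) (n : ℕ) :
    Set X :=
  {y | ∃ m ≥ n, FibIter f ω m x = y}

/-- The ω-fiberwise orbit `O⁺_ω(x) = {f_ω^n x : n ≥ 1}`. -/
def Oplus {X : Type*} {k : ℕ} (f : Fin k → X → X) (ω : ℕ → Fin k) (x : X) : Set X :=
  TailOrbit f ω x 1

/-- The shift map on `Ω = {1,…,k}^ℕ`. -/
def shiftSeq {k : ℕ} (ω : ℕ → Fin k) : ℕ → Fin k := fun n => ω (n + 1)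

/-- A sequence is disjunctive if its orbit under the shift is dense in
`Ω = {1,…,k}^ℕ` (with the product topology). -/
def Disjunctive {k : ℕ} (ω : ℕ → Fin k) : Prop :=
  Dense (Set.range fun n => shiftSeq^[n] ω)

/-- The IFS is forward minimal on the whole space. -/
def ForwardMinimal {X : Type*} [TopologicalSpace X] {k : ℕ} (f : Fin k → X → X) : Prop :=
  ∀ B : Set X, B.Nonempty → IsClosed B → (∀ i, f i '' B ⊆ B) → B = Set.univ

/-- The IFS is backward minimal on the whole space. -/
def BackwardMinimal {X : Type*} [TopologicalSpace X] {k : ℕ} (f : Fin k → X → X) : Prop :=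
  ∀ B : Set X, B.Nonempty → IsClosed B →
    (∀ g ∈ IFSsemigroup f, (g ⁻¹' B).Nonempty ∧ g ⁻¹' B ⊆ B) → B = Set.univ

/-- The attractor `A` is contractible. -/
def ContractibleAttractor {X : Type*} [TopologicalSpace X] {k : ℕ}
    (f : Fin k → X → X) (A : Set X) : Prop :=
  ∀ K : Set X, K ⊆ A → IsCompact K → K ≠ A →
    ∀ 𝒰 : Set (Set X), (∀ U ∈ 𝒰, IsOpen U) → A ⊆ ⋃₀ 𝒰 →
      ∃ g ∈ IFSsemigroup f, ∃ U ∈ 𝒰, g '' K ⊆ U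

/-- `f_{ω 0} ∘ ⋯ ∘ f_{ω (n-1)}` (compositions in the reverse order). -/
def FibDown {X : Type*} {k : ℕ} (f : Fin k → X → X) (ω : ℕ → Fin k) : ℕ → X → X
  | 0 => id
  | n + 1 => FibDown f ω n ∘ f (ω n)

/-- The attractor `A` is strongly-fibred. -/
def StronglyFibred {X : Type*} [TopologicalSpace X] {k : ℕ}
    (f : Fin k → X → X) (A : Set X) : Prop :=
  ∀ U : Set X, IsOpen U → (U ∩ A).Nonempty →
    ∃ ω : ℕ → Fin k, (⋂ n, FibDown f ω n '' A) ⊆ U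

section AuxLemmas

variable {X : Type*} {k : ℕ} (f : Fin k → X → X)

lemma hutch_iUnion' {ι : Sort*} (S : ι → Set X) :
    Hutch f (⋃ i, S i) = ⋃ i, Hutch f (S i) := by
  simp only [Hutch, image_iUnion]
  exact iUnion_comm _

lemma hutch_iter_iUnion' {ι : Sort*} (n : ℕ) (S : ι → Set X) :
    (Hutch f)^[n] (⋃ i, S i) = ⋃ i, (Hutch f)^[n] (S i) := by
  induction n generalizing S with
  | zero => simp
  | succ n ih =>
    simp only [Function.iterate_succ_apply, hutch_iUnion']
    exact ih _

lemma hutch_iter_singletons (n : ℕ) (S : Set X) :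
    (Hutch f)^[n] S = ⋃ y : S, (Hutch f)^[n] {(y : X)} := by
  conv_lhs => rw [← Set.iUnion_of_singleton_coe S]
  exact hutch_iter_iUnion' f n _

lemma hutch_iter_empty (n : ℕ) : (Hutch f)^[n] (∅ : Set X) = ∅ := by
  induction n with
  | zero => simp
  | succ n ih => simp [Function.iterate_succ_apply, Hutch, ih]

variable [TopologicalSpace X]

lemma hutch_iter_isCompact (hf : ∀ i, Continuous (f i)) (n : ℕ) {S : Set X}
    (hS : IsCompact S) : IsCompact ((Hutch f)^[n] S) := by
  induction n generalizing S with
  | zero => simpa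
  | succ n ih =>
    rw [Function.iterate_succ_apply]
    exact ih (isCompact_iUnion fun i => hS.image (hf i))

lemma hutch_iter_nonempty (hk : 0 < k) (n : ℕ) {S : Set X} (hS : S.Nonempty) :
    ((Hutch f)^[n] S).Nonempty := by
  induction n generalizing S with
  | zero => simpa
  | succ n ih =>
    rw [Function.iterate_succ_apply]
    obtain ⟨x, hx⟩ := hS
    exact ih ⟨f ⟨0, hk⟩ x, mem_iUnion.2 ⟨⟨0, hk⟩, mem_image_of_mem _ hx⟩⟩

lemma hutch_iter_pre_open (hf : ∀ i, Continuous (f i)) {U : Set X} (hU : IsOpen U)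
    (n : ℕ) : IsOpen {y : X | (Hutch f)^[n] {y} ⊆ U} := by
  induction n with
  | zero => simpa [Set.singleton_subset_iff] using hU
  | succ n ih =>
    have hset : {y : X | (Hutch f)^[n + 1] {y} ⊆ U}
        = ⋂ i, (f i) ⁻¹' {y : X | (Hutch f)^[n] {y} ⊆ U} := by
      ext y
      simp only [mem_iInter, mem_preimage, mem_setOf_eq, Function.iterate_succ_apply]
      have h1 : Hutch f {y} = ⋃ i, {f i y} := by simp [Hutch, image_singleton]
      rw [h1, hutch_iter_iUnion']
      exact iUnion_subset_iff
    rw [hset]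
    exact isOpen_iInter_of_finite fun i => (hf i).isOpen_preimage _ ih

lemma vtendsto_shift {A : ℕ → Set X} {L : Set X} (n : ℕ)
    (h : VTendsto (fun m => A (m + n)) L) : VTendsto A L := by
  intro U V hU hLU hV hVL
  obtain ⟨n₀, hn₀⟩ := h U V hU hLU hV hVL
  refine ⟨n₀ + n, fun m hm => ?_⟩
  have := hn₀ (m - n) (by omega)
  simpa [Nat.sub_add_cancel (show n ≤ m by omega)] using this

lemma vtendsto_iUnion_finset {ι : Type*} (s : Finset ι) (B : ι → ℕ → Set X)
    {L : Set X} (h : ∀ i ∈ s, (∀ n, B i n = ∅) ∨ VTendsto (B i) L)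
    (hne : ∃ i ∈ s, VTendsto (B i) L) :
    VTendsto (fun n => ⋃ i ∈ s, B i n) L := by
  intro U V hU hLU hV hVL
  obtain ⟨i₀, hi₀s, hi₀⟩ := hne
  obtain ⟨n₁, hn₁⟩ := hi₀ U V hU hLU hV hVL
  have hev : ∀ᶠ n in atTop, ∀ i ∈ s, B i n ⊆ U := by
    rw [eventually_all_finset]
    intro i hi
    rcases h i hi with hemp | hvt
    · exact Filter.Eventually.of_forall fun n => by simp [hemp n]
    · obtain ⟨n₂, hn₂⟩ := hvt U V hU hLU hV hVL
      exact eventually_atTop.2 ⟨n₂, fun n hn => (hn₂ n hn).1⟩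
  obtain ⟨n₃, hn₃⟩ := eventually_atTop.1 hev
  refine ⟨max n₁ n₃, fun n hn => ⟨?_, ?_⟩⟩
  · exact iUnion₂_subset fun i hi => hn₃ n (le_trans (le_max_right _ _) hn) i hi
  · obtain ⟨x, hx⟩ := (hn₁ n (le_trans (le_max_left _ _) hn)).2
    exact ⟨x, mem_iUnion₂.2 ⟨i₀, hi₀s, hx.1⟩, hx.2⟩

end AuxLemmas

theorem strict_attractor_properties
    {X : Type*} [TopologicalSpace X] [T2Space X] {k : ℕ}
    (f : Fin k → X → X) (hf : ∀ i, Continuous (f i))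
    (A : Set X) (hA : IsCompact A) (hAne : A.Nonempty)
    (hstrict : IsStrictAttractor f A) :
    IsPointwiseAttractor f A ∧ BasinS f A = BasinP f A ∧
      ∀ K : Set X, K.Nonempty → IsCompact K → K ⊆ BasinS f A →
        VTendsto (fun n => (Hutch f)^[n] K) A := by
  classical
  obtain ⟨-, -, U₀, hU₀o, hAU₀, hU₀⟩ := hstrict
  -- k is positive
  have hk : 0 < k := by
    obtain ⟨n₀, hn₀⟩ := hU₀ A hAne hA hAU₀ univ univ isOpen_univ (subset_univ _)
      isOpen_univ (by simpa using hAne)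
    obtain ⟨y, hy, -⟩ := (hn₀ (n₀ + 1) (Nat.le_succ _)).2
    have hy' : y ∈ (Hutch f)^[n₀ + 1] A := hy
    rw [Function.iterate_succ_apply'] at hy'
    obtain ⟨i, -⟩ := mem_iUnion.1 hy'
    exact i.pos
  -- Core: anything eventually mapped into U₀ converges
  have L1 : ∀ K : Set X, K.Nonempty → IsCompact K → ∀ n, (Hutch f)^[n] K ⊆ U₀ →
      VTendsto (fun m => (Hutch f)^[m] K) A := by
    intro K hKne hKc n hsub
    apply vtendsto_shift n
    have h := hU₀ ((Hutch f)^[n] K) (hutch_iter_nonempty f hk n hKne)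
      (hutch_iter_isCompact f hf n hKc) hsub
    have heq : (fun m => (Hutch f)^[m] ((Hutch f)^[n] K))
        = fun m => (Hutch f)^[m + n] K := by
      funext m; rw [Function.iterate_add_apply]
    rwa [heq] at h
  set Vb : ℕ → Set X := fun n => {y : X | (Hutch f)^[n] {y} ⊆ U₀} with hVb
  have hVbo : ∀ n, IsOpen (Vb n) := fun n => hutch_iter_pre_open f hf hU₀o n
  set G : Set X := ⋃ n, Vb n with hG
  have hGo : IsOpen G := isOpen_iUnion hVbo
  have hU₀G : U₀ ⊆ G := fun y hy =>
    mem_iUnion.2 ⟨0, by simpa [hVb, Set.singleton_subset_iff] using hy⟩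
  -- key: every nonempty compact subset of G converges
  have key : ∀ K : Set X, K.Nonempty → IsCompact K → K ⊆ G →
      VTendsto (fun m => (Hutch f)^[m] K) A := by
    intro K hKne hKc hKG
    obtain ⟨t, ht⟩ := hKc.elim_finite_subcover Vb hVbo (by simpa [hG] using hKG)
    obtain ⟨Kc, hKcc, hKcsub, hKceq⟩ :=
      hKc.finite_compact_cover t Vb (fun i _ => hVbo i) ht
    have hsub : ∀ i : ℕ, (Hutch f)^[i] (Kc i) ⊆ U₀ := by
      intro i
      rw [hutch_iter_singletons]
      exact iUnion_subset fun y => hKcsub i y.2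
    have hKeq : ∀ m, (Hutch f)^[m] K = ⋃ i ∈ t, (Hutch f)^[m] (Kc i) := by
      intro m
      rw [hKceq, hutch_iter_iUnion']
      exact iUnion_congr fun i => hutch_iter_iUnion' f m _
    have hpieces : ∀ i ∈ t, (∀ n, (Hutch f)^[n] (Kc i) = ∅) ∨
        VTendsto (fun n => (Hutch f)^[n] (Kc i)) A := by
      intro i _
      rcases eq_empty_or_nonempty (Kc i) with hemp | hnemp
      · exact Or.inl fun n => by rw [hemp, hutch_iter_empty]
      · exact Or.inr (L1 (Kc i) hnemp (hKcc i) i (hsub i))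
    have hwitness : ∃ i ∈ t, VTendsto (fun n => (Hutch f)^[n] (Kc i)) A := by
      obtain ⟨x, hx⟩ := hKne
      rw [hKceq] at hx
      obtain ⟨i, hit, hxi⟩ := mem_iUnion₂.1 hx
      exact ⟨i, hit, L1 (Kc i) ⟨x, hxi⟩ (hKcc i) i (hsub i)⟩
    have := vtendsto_iUnion_finset t (fun i n => (Hutch f)^[n] (Kc i)) hpieces hwitness
    intro U V hU hLU hV hVL
    obtain ⟨n₀, hn₀⟩ := this U V hU hLU hV hVL
    refine ⟨n₀, fun n hn => ?_⟩
    have h := hn₀ n hn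
    rw [show (fun m => (Hutch f)^[m] K) n = ⋃ i ∈ t, (Hutch f)^[n] (Kc i) from hKeq n]
    exact h
  -- G is a member of the BasinS family
  have hGmem : G ∈ {U : Set X | IsOpen U ∧ A ⊆ U ∧
      ∀ K : Set X, K.Nonempty → IsCompact K → K ⊆ U →
        VTendsto (fun n => (Hutch f)^[n] K) A} :=
    ⟨hGo, hAU₀.trans hU₀G, key⟩
  have hGS : G ⊆ BasinS f A := fun x hx => ⟨G, hGmem, hx⟩
  -- BasinS ⊆ BasinP
  have hSP : BasinS f A ⊆ BasinP f A := by
    intro x hx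
    obtain ⟨U', ⟨hU'o, hAU', hU'⟩, hxU'⟩ := hx
    exact hU' {x} (singleton_nonempty x) isCompact_singleton
      (singleton_subset_iff.2 hxU')
  -- BasinP ⊆ G
  have hPG : BasinP f A ⊆ G := by
    intro x hx
    obtain ⟨n₀, hn₀⟩ := hx U₀ univ hU₀o hAU₀ isOpen_univ (by simpa using hAne)
    exact mem_iUnion.2 ⟨n₀, (hn₀ n₀ le_rfl).1⟩
  have hU₀P : U₀ ⊆ BasinP f A := fun x hx =>
    hU₀ {x} (singleton_nonempty x) isCompact_singleton (singleton_subset_iff.2 hx)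
  refine ⟨⟨hA, hAne, U₀, hU₀o, hAU₀, hU₀P⟩,
    Subset.antisymm hSP (hPG.trans hGS), ?_⟩
  intro K hKne hKc hKS
  exact key K hKne hKc ((hKS.trans hSP).trans hPG)
end

section
/- Let X be a Hausdorff topological space, f₁,…,f_k : X → X continuous maps, A a nonempty compact subset of X, and x ∈ B_p(A). Then A and the closure of Γ(x) are both compact sets satisfying f_i(S) ⊆ S for every i = 1,…,k; moreover A = ⋂_{m≥1} closure(⋃_{n≥m} Fⁿ({x})) and closure(Γ(x)) = A ∪ ⋃_{n≥1} Fⁿ({x}) (in particular A ⊆ closure(Γ(x))). Consequently, for every ω ∈ Ω and every n ∈ ℕ, the set closure({f_ω^m(x) : m ≥ n}) is compact. -/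
open Set Filter Topology

lemma hutch_iterate {X : Type*} {k : ℕ} (f : Fin k → X → X) (x : X) (n : ℕ) :
    (Hutch f)^[n] {x} =
      {y | ∃ l : List (Fin k), l.length = n ∧ (l.map f).foldr (· ∘ ·) id x = y} := by
  induction n with
  | zero =>
    ext y
    simp only [Function.iterate_zero, id_eq, mem_singleton_iff, mem_setOf_eq]
    constructor
    · rintro rfl; exact ⟨[], rfl, rfl⟩
    · rintro ⟨l, hl, rfl⟩
      rw [List.length_eq_zero_iff] at hl
      subst hl; rfl
  | succ n ih =>
    rw [Function.iterate_succ_apply', ih]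
    ext y
    simp only [Hutch, mem_iUnion, mem_image, mem_setOf_eq]
    constructor
    · rintro ⟨i, z, ⟨l, hl, rfl⟩, rfl⟩
      exact ⟨i :: l, by simp [hl], rfl⟩
    · rintro ⟨l, hl, rfl⟩
      cases l with
      | nil => simp at hl
      | cons i l => exact ⟨i, _, ⟨l, by simpa using hl, rfl⟩, rfl⟩

lemma hutch_iter_finite {X : Type*} {k : ℕ} (f : Fin k → X → X) (x : X) (n : ℕ) :
    ((Hutch f)^[n] {x}).Finite := by
  induction n with
  | zero => simp
  | succ n ih =>
    rw [Function.iterate_succ_apply']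
    exact Set.finite_iUnion fun i => ih.image (f i)

lemma gamma_eq {X : Type*} {k : ℕ} (f : Fin k → X → X) (x : X) :
    GammaOrbit f x = ⋃ n ∈ Set.Ici 1, (Hutch f)^[n] {x} := by
  ext y
  simp only [GammaOrbit, IFSsemigroup, mem_setOf_eq, mem_iUnion, mem_Ici, hutch_iterate]
  constructor
  · rintro ⟨g, ⟨l, hl, rfl⟩, rfl⟩
    exact ⟨l.length, ⟨Nat.one_le_iff_ne_zero.2 (by simpa using hl), l, rfl, rfl⟩⟩
  · rintro ⟨n, hn, l, hlen, rfl⟩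
    refine ⟨_, ⟨l, ?_, rfl⟩, rfl⟩
    rw [← List.length_pos_iff]
    omega

lemma fibIter_eq {X : Type*} {k : ℕ} (f : Fin k → X → X) (ω : ℕ → Fin k) (m : ℕ) :
    ∃ l : List (Fin k), l.length = m ∧ FibIter f ω m = (l.map f).foldr (· ∘ ·) id := by
  induction m with
  | zero => exact ⟨[], rfl, rfl⟩
  | succ m ih =>
    obtain ⟨l, hl, h⟩ := ih
    exact ⟨ω m :: l, by simp [hl], by simp [FibIter, h]⟩

theorem basin_point_orbit_properties
    {X : Type*} [TopologicalSpace X] [T2Space X] {k : ℕ}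
    (f : Fin k → X → X) (hf : ∀ i, Continuous (f i))
    (A : Set X) (hA : IsCompact A) (hAne : A.Nonempty)
    (x : X) (hx : x ∈ BasinP f A) :
    (∀ i, f i '' A ⊆ A) ∧
    IsCompact (closure (GammaOrbit f x)) ∧
    (∀ i, f i '' closure (GammaOrbit f x) ⊆ closure (GammaOrbit f x)) ∧
    A = ⋂ m ∈ Set.Ici 1, closure (⋃ n ∈ Set.Ici m, (Hutch f)^[n] {x}) ∧
    closure (GammaOrbit f x) = A ∪ ⋃ n ∈ Set.Ici 1, (Hutch f)^[n] {x} ∧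
    A ⊆ closure (GammaOrbit f x) ∧
    ∀ (ω : ℕ → Fin k) (n : ℕ), IsCompact (closure (TailOrbit f ω x n)) := by
  have hx' : VTendsto (fun n => (Hutch f)^[n] {x}) A := hx
  -- separation of a point from A
  have hsep : ∀ y ∉ A, ∃ U W : Set X, IsOpen U ∧ IsOpen W ∧ A ⊆ U ∧ y ∈ W ∧
      Disjoint U W := by
    intro y hy
    obtain ⟨U, W, hU, hW, hAU, hyW, hd⟩ :=
      SeparatedNhds.of_isCompact_isCompact hA isCompact_singleton
        (disjoint_singleton_right.2 hy)
    exact ⟨U, W, hU, hW, hAU, hyW rfl, hd⟩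
  -- invariance of A
  have hinv : ∀ i, f i '' A ⊆ A := by
    intro i
    rintro _ ⟨a, ha, rfl⟩
    by_contra hfa
    obtain ⟨U, W, hU, hW, hAU, hfaW, hd⟩ := hsep _ hfa
    obtain ⟨n₀, hn₀⟩ := hx' U ((f i) ⁻¹' W) hU hAU (hW.preimage (hf i)) ⟨a, hfaW, ha⟩
    obtain ⟨z, hz1, hz2⟩ := (hn₀ n₀ le_rfl).2
    have hsub : (Hutch f)^[n₀+1] {x} ⊆ U := (hn₀ (n₀+1) (Nat.le_succ _)).1
    have : f i z ∈ (Hutch f)^[n₀+1] {x} := by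
      rw [Function.iterate_succ_apply']
      exact mem_iUnion.2 ⟨i, z, hz1, rfl⟩
    exact hd.ne_of_mem (hsub this) hz2 rfl
  -- A ⊆ closure of any tail union
  have hAcl : ∀ m : ℕ, A ⊆ closure (⋃ n ∈ Set.Ici m, (Hutch f)^[n] {x}) := by
    intro m a ha
    rw [mem_closure_iff]
    intro V hV haV
    obtain ⟨n₀, hn₀⟩ := hx' univ V isOpen_univ (subset_univ _) hV ⟨a, haV, ha⟩
    obtain ⟨z, hz1, hz2⟩ := (hn₀ (max n₀ m) (le_max_left _ _)).2
    exact ⟨z, hz2, mem_iUnion₂.2 ⟨max n₀ m, mem_Ici.2 (le_max_right _ _), hz1⟩⟩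
  -- the intersection formula
  have hint : A = ⋂ m ∈ Set.Ici 1, closure (⋃ n ∈ Set.Ici m, (Hutch f)^[n] {x}) := by
    apply Subset.antisymm
    · exact subset_iInter₂ fun m _ => hAcl m
    · intro y hy
      by_contra hyA
      obtain ⟨U, W, hU, hW, hAU, hyW, hd⟩ := hsep _ hyA
      obtain ⟨n₀, hn₀⟩ := hx' U U hU hAU hU (hAne.imp fun a ha => ⟨hAU ha, ha⟩)
      have hm : max n₀ 1 ∈ Set.Ici 1 := mem_Ici.2 (le_max_right _ _)
      have hy' := mem_iInter₂.1 hy _ hm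
      rw [mem_closure_iff] at hy'
      obtain ⟨z, hzW, hz⟩ := hy' W hW hyW
      obtain ⟨n, hn, hzn⟩ := mem_iUnion₂.1 hz
      have : z ∈ U := (hn₀ n (le_trans (le_max_left _ _) hn)).1 hzn
      exact hd.ne_of_mem this hzW rfl
  -- closure of orbit
  set B := ⋃ n ∈ Set.Ici 1, (Hutch f)^[n] {x} with hB
  have hclΓ : closure (GammaOrbit f x) = A ∪ B := by
    rw [gamma_eq]
    apply Subset.antisymm
    · intro y hy
      by_contra hyAB
      rw [mem_union] at hyAB
      push_neg at hyAB
      obtain ⟨hyA, hyB⟩ := hyAB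
      obtain ⟨U, W, hU, hW, hAU, hyW, hd⟩ := hsep _ hyA
      obtain ⟨n₀, hn₀⟩ := hx' U U hU hAU hU (hAne.imp fun a ha => ⟨hAU ha, ha⟩)
      have hfin : (⋃ n ∈ Set.Ico 1 n₀, (Hutch f)^[n] {x}).Finite :=
        (Set.finite_Ico 1 n₀).biUnion fun n _ => hutch_iter_finite f x n
      set W' := W \ (⋃ n ∈ Set.Ico 1 n₀, (Hutch f)^[n] {x}) with hW'
      have hW'open : IsOpen W' := hW.sdiff hfin.isClosed
      have hyW' : y ∈ W' := ⟨hyW, fun hmem => by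
        obtain ⟨n, hn, h⟩ := mem_iUnion₂.1 hmem
        exact hyB (mem_iUnion₂.2 ⟨n, hn.1, h⟩)⟩
      rw [mem_closure_iff] at hy
      obtain ⟨z, hzW', hz⟩ := hy W' hW'open hyW'
      obtain ⟨n, hn, hzn⟩ := mem_iUnion₂.1 hz
      rcases lt_or_ge n n₀ with h | h
      · exact hzW'.2 (mem_iUnion₂.2 ⟨n, ⟨hn, h⟩, hzn⟩)
      · exact hd.ne_of_mem ((hn₀ n h).1 hzn) hzW'.1 rfl
    · exact union_subset (hAcl 1) subset_closure
  have hcpt : IsCompact (closure (GammaOrbit f x)) := by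
    rw [hclΓ]
    apply isCompact_of_finite_subcover
    intro ι U hUo hcov
    classical
    obtain ⟨t₁, ht₁⟩ := hA.elim_finite_subcover U hUo (subset_union_left.trans hcov)
    set U₀ := ⋃ i ∈ t₁, U i with hU₀
    have hU₀o : IsOpen U₀ := isOpen_biUnion fun i _ => hUo i
    obtain ⟨n₀, hn₀⟩ := hx' U₀ U₀ hU₀o ht₁ hU₀o (hAne.imp fun a ha => ⟨ht₁ ha, ha⟩)
    have hfin : (⋃ n ∈ Set.Ico 1 n₀, (Hutch f)^[n] {x}).Finite :=
      (Set.finite_Ico 1 n₀).biUnion fun n _ => hutch_iter_finite f x n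
    obtain ⟨t₂, ht₂⟩ := hfin.isCompact.elim_finite_subcover U hUo
      (fun z hz => by
        obtain ⟨n, hn, h⟩ := mem_iUnion₂.1 hz
        exact hcov (Or.inr (mem_iUnion₂.2 ⟨n, hn.1, h⟩)))
    refine ⟨t₁ ∪ t₂, ?_⟩
    rintro z (hz | hz)
    · obtain ⟨i, hi, h⟩ := mem_iUnion₂.1 (ht₁ hz)
      exact mem_iUnion₂.2 ⟨i, Finset.mem_union_left _ hi, h⟩
    · obtain ⟨n, hn, hzn⟩ := mem_iUnion₂.1 hz
      rcases lt_or_ge n n₀ with h | h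
      · obtain ⟨i, hi, hh⟩ := mem_iUnion₂.1 (ht₂ (mem_iUnion₂.2 ⟨n, ⟨hn, h⟩, hzn⟩))
        exact mem_iUnion₂.2 ⟨i, Finset.mem_union_right _ hi, hh⟩
      · obtain ⟨i, hi, hh⟩ := mem_iUnion₂.1 ((hn₀ n h).1 hzn)
        exact mem_iUnion₂.2 ⟨i, Finset.mem_union_left _ hi, hh⟩
  have hΓinv : ∀ i, f i '' closure (GammaOrbit f x) ⊆ closure (GammaOrbit f x) := by
    intro i
    have h1 : f i '' GammaOrbit f x ⊆ GammaOrbit f x := by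
      rintro _ ⟨_, ⟨g, ⟨l, hl, rfl⟩, rfl⟩, rfl⟩
      exact ⟨_, ⟨i :: l, List.cons_ne_nil _ _, rfl⟩, rfl⟩
    calc f i '' closure (GammaOrbit f x)
        ⊆ closure (f i '' GammaOrbit f x) := image_closure_subset_closure_image (hf i)
      _ ⊆ closure (GammaOrbit f x) := closure_mono h1
  refine ⟨hinv, hcpt, hΓinv, hint, hclΓ, (hAcl 1).trans (by rw [gamma_eq]), ?_⟩
  intro ω n
  have hsub : TailOrbit f ω x n ⊆ {x} ∪ GammaOrbit f x := by
    rintro _ ⟨m, hm, rfl⟩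
    rcases Nat.eq_zero_or_pos m with rfl | hmpos
    · exact Or.inl rfl
    · obtain ⟨l, hl, h⟩ := fibIter_eq f ω m
      refine Or.inr ⟨_, ⟨l, ?_, h⟩, rfl⟩
      rw [← List.length_pos_iff, hl]; exact hmpos
  have hclos : closure (TailOrbit f ω x n) ⊆ ({x} : Set X) ∪ closure (GammaOrbit f x) := by
    calc closure (TailOrbit f ω x n) ⊆ closure (({x} : Set X) ∪ GammaOrbit f x) :=
        closure_mono hsub
      _ = ({x} : Set X) ∪ closure (GammaOrbit f x) := by rw [closure_union, closure_singleton]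
  exact IsCompact.of_isClosed_subset (isCompact_singleton.union hcpt) isClosed_closure hclos
end

section
/- Let X be a Hausdorff topological space, f₁,…,f_k : X → X continuous maps, and A a pointwise attractor for the IFS. Then the following are equivalent: (i) there exists ω ∈ Ω such that A ⊆ closure(O⁺_ω(x)) for every x ∈ B_p(A); (ii) A ⊆ closure(O⁺_ω(x)) for every disjunctive sequence ω ∈ Ω and every x ∈ B_p(A). -/
open Set Filter Topology

-- aux lemmas
lemma fibIter_cont {X : Type*} [TopologicalSpace X] {k : ℕ} {f : Fin k → X → X}
    (hf : ∀ i, Continuous (f i)) (ω : ℕ → Fin k) : ∀ n, Continuous (FibIter f ω n)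
  | 0 => continuous_id
  | n + 1 => (hf _).comp (fibIter_cont hf ω n)

lemma fibIter_mem {X : Type*} {k : ℕ} (f : Fin k → X → X) (ω : ℕ → Fin k) (x : X) :
    ∀ n, FibIter f ω n x ∈ (Hutch f)^[n] {x}
  | 0 => rfl
  | n + 1 => by
    rw [Function.iterate_succ_apply']
    exact Set.mem_iUnion.2 ⟨ω n, Set.mem_image_of_mem _ (fibIter_mem f ω x n)⟩

lemma fibIter_add {X : Type*} {k : ℕ} (f : Fin k → X → X) (ω ω' : ℕ → Fin k) (x : X)
    (n : ℕ) : ∀ (m : ℕ), (∀ t < m, ω' (n + t) = ω t) →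
    FibIter f ω' (n + m) x = FibIter f ω m (FibIter f ω' n x)
  | 0, _ => rfl
  | m + 1, h => by
    show f (ω' (n + m)) (FibIter f ω' (n + m) x) = f (ω m) (FibIter f ω m _)
    rw [fibIter_add f ω ω' x n m (fun t ht => h t (Nat.lt_succ_of_lt ht)),
      h m (Nat.lt_succ_self m)]

lemma shiftSeq_iterate {k : ℕ} (ω : ℕ → Fin k) (p t : ℕ) : shiftSeq^[p] ω t = ω (t + p) := by
  induction p generalizing ω with
  | zero => rfl
  | succ p ih =>
    rw [Function.iterate_succ_apply, ih]
    show ω (t + p + 1) = ω (t + (p + 1))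
    congr 1

lemma disjunctive_window {k : ℕ} {ω' : ℕ → Fin k} (h : Disjunctive ω')
    (ξ : ℕ → Fin k) (L : ℕ) : ∃ p, ∀ t < L, ω' (t + p) = ξ t := by
  have hC : IsOpen {η : ℕ → Fin k | ∀ t < L, η t = ξ t} := by
    have he : {η : ℕ → Fin k | ∀ t < L, η t = ξ t} =
        ⋂ t : Fin L, (fun η : ℕ → Fin k => η t) ⁻¹' {ξ t} := by
      ext η
      simp only [Set.mem_setOf_eq, Set.mem_iInter, Set.mem_preimage, Set.mem_singleton_iff]
      exact ⟨fun hh t => hh t t.isLt, fun hh t ht => hh ⟨t, ht⟩⟩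
    rw [he]
    exact isOpen_iInter_of_finite fun t => (isOpen_discrete _).preimage (continuous_apply _)
  obtain ⟨η, ⟨p, hp⟩, hη⟩ := h.exists_mem_open hC ⟨ξ, fun t _ => rfl⟩
  refine ⟨p, fun t ht => ?_⟩
  have h2 : shiftSeq^[p] ω' t = η t := congrFun hp t
  rw [← shiftSeq_iterate ω' p t, h2]
  exact hη t ht

lemma exists_disjunctive {k : ℕ} (hk : 0 < k) : ∃ ω : ℕ → Fin k, Disjunctive ω := by
  have hne : Nonempty (Fin k) := ⟨⟨0, hk⟩⟩
  obtain ⟨s, hs⟩ := exists_surjective_nat (List (Fin k))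
  set d : Fin k := ⟨0, hk⟩ with hd
  let L : ℕ → List (Fin k) := fun n => Nat.rec [] (fun m acc => acc ++ s m) n
  have hLsucc : ∀ n, L (n + 1) = L n ++ s n := fun _ => rfl
  have hlen : ∀ n m, n ≤ m → (L n).length ≤ (L m).length := by
    intro n m hnm
    induction hnm with
    | refl => exact le_refl _
    | step h ih =>
      rw [hLsucc, List.length_append]
      omega
  have hpre : ∀ n m, n ≤ m → ∀ t, t < (L n).length → (L m).getD t d = (L n).getD t d := by
    intro n m hnm
    induction hnm with
    | refl => intro t _; rfl
    | step h ih =>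
      intro t ht
      rw [hLsucc, List.getD_append _ _ _ _ (lt_of_lt_of_le ht (hlen _ _ h)), ih t ht]
  have hex : ∀ t : ℕ, ∃ n, t < (L n).length := by
    intro t
    obtain ⟨n, hn⟩ := hs (List.replicate (t + 1) d)
    refine ⟨n + 1, ?_⟩
    rw [hLsucc, List.length_append, hn, List.length_replicate]
    omega
  set ω : ℕ → Fin k := fun t => (L (Nat.find (hex t))).getD t d with hωdef
  have homega : ∀ n t, t < (L n).length → ω t = (L n).getD t d := by
    intro n t ht
    have hN : t < (L (Nat.find (hex t))).length := Nat.find_spec (hex t)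
    rcases le_total n (Nat.find (hex t)) with h | h
    · exact hpre n _ h t ht
    · exact (hpre _ n h t hN).symm
  have hocc : ∀ u : List (Fin k), ∃ p, ∀ t < u.length, ω (p + t) = u.getD t d := by
    intro u
    obtain ⟨m, hm⟩ := hs u
    refine ⟨(L m).length, fun t ht => ?_⟩
    have hlt : (L m).length + t < (L (m + 1)).length := by
      rw [hLsucc, List.length_append, hm]; omega
    rw [homega (m + 1) _ hlt, hLsucc, hm,
      List.getD_append_right _ _ _ _ (Nat.le_add_right _ _)]
    congr 1
    omega
  refine ⟨ω, ?_⟩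
  rw [Disjunctive, dense_iff_inter_open]
  intro U hU ⟨ξ, hξ⟩
  obtain ⟨I, u, h1, h2⟩ := isOpen_pi_iff.mp hU ξ hξ
  set Len := I.sup id + 1 with hLen
  have hI : ∀ a ∈ I, a < Len := fun a ha =>
    Nat.lt_succ_of_le (Finset.le_sup (f := id) ha)
  obtain ⟨p, hp⟩ := hocc (List.ofFn fun i : Fin Len => ξ i)
  refine ⟨shiftSeq^[p] ω, h2 ?_, ⟨p, rfl⟩⟩
  intro a ha
  have haL : a < Len := hI a ha
  have : shiftSeq^[p] ω a = ξ a := by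
    rw [shiftSeq_iterate, Nat.add_comm a p,
      hp a (by rw [List.length_ofFn]; exact haL)]
    rw [List.getD_eq_getElem _ _ (by rw [List.length_ofFn]; exact haL),
      List.getElem_ofFn]
  rw [this]
  exact (h1 a ha).2

theorem deterministic_chaos_game_equivalence
    {X : Type*} [TopologicalSpace X] [T2Space X] {k : ℕ} (hk : 0 < k)
    (f : Fin k → X → X) (hf : ∀ i, Continuous (f i))
    (A : Set X) (hA : IsPointwiseAttractor f A) :
    (∃ ω : ℕ → Fin k, ∀ x ∈ BasinP f A, A ⊆ closure (Oplus f ω x)) ↔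
    (∀ ω : ℕ → Fin k, Disjunctive ω → ∀ x ∈ BasinP f A, A ⊆ closure (Oplus f ω x)) := by
  obtain ⟨hAc, hAne, U₀, hU₀o, hAU₀, hU₀b⟩ := hA
  constructor
  · rintro ⟨ω, hω⟩ ω' hdisj x hx a ha
    rw [mem_closure_iff]
    intro U hUo haU
    have hcov : A ⊆ ⋃ m : ℕ, FibIter f ω (m + 1) ⁻¹' U := by
      intro z hz
      have hzb : z ∈ BasinP f A := hU₀b (hAU₀ hz)
      have hcl := hω z hzb ha
      rw [mem_closure_iff] at hcl
      obtain ⟨y, hyU, m, hm1, hmz⟩ := hcl U hUo haU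
      match m, hm1 with
      | m + 1, _ =>
        refine Set.mem_iUnion.2 ⟨m, ?_⟩
        show FibIter f ω (m + 1) z ∈ U
        rw [hmz]; exact hyU
    obtain ⟨T, hT⟩ := hAc.elim_finite_subcover _
      (fun m => hUo.preimage (fibIter_cont hf ω (m + 1))) hcov
    set W := U₀ ∩ ⋃ m ∈ T, FibIter f ω (m + 1) ⁻¹' U with hWdef
    have hWo : IsOpen W := hU₀o.inter
      (isOpen_biUnion fun m _ => hUo.preimage (fibIter_cont hf ω (m + 1)))
    have hAW : A ⊆ W := Set.subset_inter hAU₀ hT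
    obtain ⟨N₁, hN₁⟩ := hx W Set.univ hWo hAW isOpen_univ (by simpa using hAne)
    set M := T.sup id + 1 with hM
    have hMT : ∀ m ∈ T, m + 1 ≤ M := fun m hm =>
      Nat.succ_le_succ (Finset.le_sup (f := id) hm)
    obtain ⟨p, hp⟩ := disjunctive_window hdisj (fun t => ω (t - N₁)) (N₁ + M)
    set n := p + N₁ with hn
    have hagree : ∀ t < M, ω' (n + t) = ω t := by
      intro t ht
      have h1 : n + t = (N₁ + t) + p := by omega
      rw [h1, hp (N₁ + t) (by omega)]
      congr 1
      omega
    have hyW : FibIter f ω' n x ∈ W :=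
      (hN₁ n (by omega)).1 (fibIter_mem f ω' x n)
    obtain ⟨-, hy2⟩ := hyW
    simp only [Set.mem_iUnion, Set.mem_preimage] at hy2
    obtain ⟨m, hmT, hym⟩ := hy2
    refine ⟨FibIter f ω' (n + (m + 1)) x, ?_, ⟨n + (m + 1), by omega, rfl⟩⟩
    rw [fibIter_add f ω ω' x n (m + 1)
      (fun t ht => hagree t (lt_of_lt_of_le ht (hMT m hmT)))]
    exact hym
  · intro h
    obtain ⟨ω₀, hω₀⟩ := exists_disjunctive hk
    exact ⟨ω₀, h ω₀ hω₀⟩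
end

section
/- Let X be a Hausdorff topological space, f₁,…,f_k : X → X continuous maps, and let A be a nonempty compact forward minimal self-similar set for the IFS which is first-countable in the subspace topology. Let ℙ be a probability measure on Ω = {1,…,k}^ℕ (with the product σ-algebra) for which there is 0 < p ≤ 1/k such that for every n ≥ 1, every finite word a₁…a_{n−1} ∈ {1,…,k}^{n−1} and every i ∈ {1,…,k}, ℙ(cyl(a₁…a_{n−1}i)) ≥ p·ℙ(cyl(a₁…a_{n−1})). Then for every x ∈ B_p(A), the set {ω ∈ Ω : A ⊆ closure(O⁺_ω(x))} has ℙ-measure 1. -/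
open Set Filter Topology

/-- The cylinder of a finite word. -/
def Cyl {k : ℕ} (w : List (Fin k)) : Set (ℕ → Fin k) :=
  {ω | ∀ j : Fin w.length, ω j = w.get j}

section PCGAux

open MeasureTheory

namespace PCG

variable {X : Type*} {k : ℕ}

/-- apply the word left-to-right: the first letter is applied first. -/
def apW (f : Fin k → X → X) (w : List (Fin k)) (z : X) : X := w.foldl (fun y i => f i y) z

variable (f : Fin k → X → X)

@[simp] lemma apW_nil (z : X) : apW f [] z = z := rfl
@[simp] lemma apW_cons (i : Fin k) (w : List (Fin k)) (z : X) :
    apW f (i :: w) z = apW f w (f i z) := rfl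

lemma apW_append (w v : List (Fin k)) (z : X) :
    apW f (w ++ v) z = apW f v (apW f w z) := List.foldl_append

/-- the word of the first `n` letters of `ω`. -/
def wof (ω : ℕ → Fin k) (n : ℕ) : List (Fin k) := List.ofFn fun j : Fin n => ω j

@[simp] lemma wof_length (ω : ℕ → Fin k) (n : ℕ) : (wof ω n).length = n := List.length_ofFn

lemma wof_succ (ω : ℕ → Fin k) (n : ℕ) : wof ω (n+1) = wof ω n ++ [ω n] := by
  rw [wof, List.ofFn_succ']
  simp [List.concat_eq_append]
  rfl

lemma mem_cyl_iff {w : List (Fin k)} {ω : ℕ → Fin k} :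
    ω ∈ Cyl w ↔ ∀ j (h : j < w.length), ω j = w.get ⟨j, h⟩ := by
  constructor
  · intro h j hj; exact h ⟨j, hj⟩
  · intro h j; exact h j j.2

lemma mem_cyl_wof (ω : ℕ → Fin k) (n : ℕ) : ω ∈ Cyl (wof ω n) := by
  intro j
  rcases j with ⟨j, hj⟩
  simp [wof] at hj ⊢

lemma wof_eq_take {w : List (Fin k)} {ω : ℕ → Fin k} (hω : ω ∈ Cyl w) {n : ℕ}
    (hn : n ≤ w.length) : wof ω n = w.take n := by
  apply List.ext_getElem
  · simp [hn]
  · intro j h1 h2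
    have hj : j < n := by simpa using h1
    have hjw : j < w.length := lt_of_lt_of_le hj hn
    have := mem_cyl_iff.1 hω j hjw
    simp [wof, List.getElem_take, this]

lemma cyl_append_subset (w v : List (Fin k)) : Cyl (w ++ v) ⊆ Cyl w := by
  intro ω h
  rw [mem_cyl_iff] at h ⊢
  intro j hj
  have hj' : j < (w ++ v).length := by simp; omega
  have := h j hj'
  rw [this]
  simp only [List.get_eq_getElem]
  exact List.getElem_append_left hj

lemma measurableSet_cyl (w : List (Fin k)) : MeasurableSet (Cyl w) := by
  have : Cyl w = ⋂ j : Fin w.length, {ω : ℕ → Fin k | ω j = w.get j} := by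
    ext ω; simp [Cyl, Set.mem_iInter]
  rw [this]
  exact MeasurableSet.iInter fun j =>
    (measurable_pi_apply (j : ℕ)) (MeasurableSet.singleton _)

lemma cyl_disjoint {w w' : List (Fin k)} (hl : w.length = w'.length) (hne : w ≠ w') :
    Disjoint (Cyl w) (Cyl w') := by
  rw [Set.disjoint_left]
  intro ω hw hw'
  apply hne
  apply List.ext_getElem hl
  intro j h1 h2
  have e1 := mem_cyl_iff.1 hw j h1
  have e2 := mem_cyl_iff.1 hw' j h2
  simp only [List.get_eq_getElem] at e1 e2
  rw [← e1, ← e2]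

lemma cyl_measure_ext (P : Measure (ℕ → Fin k))
    (p : ℝ) (hP : ∀ (w : List (Fin k)) (i : Fin k),
      ENNReal.ofReal p * P (Cyl w) ≤ P (Cyl (w ++ [i])))
    (w v : List (Fin k)) :
    (ENNReal.ofReal p)^v.length * P (Cyl w) ≤ P (Cyl (w ++ v)) := by
  induction v using List.reverseRecOn with
  | nil => simp
  | append_singleton v i ih =>
    have : (ENNReal.ofReal p)^(v ++ [i]).length * P (Cyl w)
        = ENNReal.ofReal p * ((ENNReal.ofReal p)^v.length * P (Cyl w)) := by
      simp [pow_succ]; ring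
    rw [this, ← List.append_assoc]
    calc ENNReal.ofReal p * ((ENNReal.ofReal p)^v.length * P (Cyl w))
        ≤ ENNReal.ofReal p * P (Cyl (w ++ v)) := mul_le_mul_right ih _
      _ ≤ P (Cyl (w ++ v ++ [i])) := hP _ _

lemma apW_mem_hutch (w : List (Fin k)) (S : Set X) {y : X} (hy : y ∈ S) :
    apW f w y ∈ (Hutch f)^[w.length] S := by
  induction w generalizing S y with
  | nil => simpa
  | cons i w ih =>
    have h1 : f i y ∈ Hutch f S := Set.mem_iUnion.2 ⟨i, Set.mem_image_of_mem _ hy⟩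
    have := ih (Hutch f S) h1
    simp only [List.length_cons, Function.iterate_succ_apply]
    exact this

lemma foldr_eq_apW (l : List (Fin k)) (z : X) :
    (l.map f).foldr (· ∘ ·) id z = apW f l.reverse z := by
  induction l generalizing z with
  | nil => simp [apW]
  | cons i l ih =>
    simp only [List.map_cons, List.foldr_cons, Function.comp_apply, List.reverse_cons]
    rw [ih, apW_append]
    simp [apW]

lemma semigroup_word {g : X → X} (hg : g ∈ IFSsemigroup f) :
    ∃ w : List (Fin k), w ≠ [] ∧ ∀ z, g z = apW f w z := by
  obtain ⟨l, hl, rfl⟩ := hg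
  exact ⟨l.reverse, by simpa using hl, fun z => foldr_eq_apW f l z⟩

lemma apW_mem_of_selfSimilar {A : Set X} (hss : A = Hutch f A) (w : List (Fin k))
    {z : X} (hz : z ∈ A) : apW f w z ∈ A := by
  induction w generalizing z with
  | nil => simpa [apW]
  | cons i w ih =>
    have : f i z ∈ A := by
      rw [hss]; exact Set.mem_iUnion.2 ⟨i, Set.mem_image_of_mem _ hz⟩
    simpa [apW] using ih this

lemma continuous_apW [TopologicalSpace X] {f : Fin k → X → X} (hf : ∀ i, Continuous (f i))
    (w : List (Fin k)) : Continuous (apW f w) := by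
  induction w with
  | nil => exact continuous_id
  | cons i w ih => exact ih.comp (hf i)

lemma fibIter_eq_apW (ω : ℕ → Fin k) (n : ℕ) (z : X) :
    FibIter f ω n z = apW f (wof ω n) z := by
  induction n with
  | zero => rfl
  | succ n ih =>
    have : FibIter f ω (n+1) z = f (ω n) (FibIter f ω n z) := rfl
    rw [this, ih, wof_succ, apW_append]
    rfl

lemma core_estimate (P : Measure (ℕ → Fin k)) [IsProbabilityMeasure P]
    (p : ℝ) (hp0 : 0 < p) (hp1 : p ≤ 1)
    (hP : ∀ (w : List (Fin k)) (i : Fin k),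
      ENNReal.ofReal p * P (Cyl w) ≤ P (Cyl (w ++ [i])))
    (x : X) (V U : Set X) (M n₀ : ℕ) (hM : 1 ≤ M)
    (φ : X → List (Fin k))
    (hφ : ∀ z ∈ U, (φ z).length ≤ M ∧ 1 ≤ (φ z).length ∧ apW f (φ z) z ∈ V)
    (horb : ∀ w : List (Fin k), n₀ ≤ w.length → apW f w x ∈ U) :
    P {ω | ∀ n, n₀ ≤ n → apW f (wof ω n) x ∉ V} = 0 := by
  classical
  set q : ENNReal := (ENNReal.ofReal p)^M with hq
  have hq0 : q ≠ 0 := pow_ne_zero _ (ENNReal.ofReal_pos.2 hp0).ne'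
  have hq1 : q ≤ 1 := by
    apply pow_le_one₀ (zero_le)
    simpa [ENNReal.ofReal_le_one] using hp1
  set Bad : ℕ → Set (ℕ → Fin k) :=
    fun m => {ω | ∀ n, n₀ ≤ n → n ≤ n₀ + m*M → apW f (wof ω n) x ∉ V} with hBad
  set W : ℕ → Set (List (Fin k)) :=
    fun m => {w | w.length = n₀ + m*M ∧
      ∀ n, n₀ ≤ n → n ≤ n₀ + m*M → apW f (w.take n) x ∉ V} with hW
  have badW : ∀ m, Bad m = ⋃ w ∈ W m, Cyl w := by
    intro m
    ext ω
    simp only [hBad, hW, Set.mem_setOf_eq, Set.mem_iUnion]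
    constructor
    · intro h
      refine ⟨wof ω (n₀ + m*M), ⟨wof_length ω _, ?_⟩, mem_cyl_wof ω _⟩
      intro n hn1 hn2
      have ht : (wof ω (n₀+m*M)).take n = wof ω n := by
        rw [← wof_eq_take (mem_cyl_wof ω (n₀+m*M))]
        rw [wof_length]; exact hn2
      rw [ht]; exact h n hn1 hn2
    · rintro ⟨w, ⟨hlen, hcond⟩, hω⟩
      intro n hn1 hn2
      have ht : wof ω n = w.take n := wof_eq_take hω (by rw [hlen]; exact hn2)
      rw [ht]; exact hcond n hn1 hn2
  have W_countable : ∀ m, (W m).Countable := fun m => Set.to_countable _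
  have W_disj : ∀ m, (W m).PairwiseDisjoint Cyl := by
    intro m w hw w' hw' hne
    exact cyl_disjoint (by rw [hw.1, hw'.1]) hne
  have badMeasEq : ∀ m, P (Bad m) = ∑' w : W m, P (Cyl (w : List (Fin k))) := by
    intro m
    rw [badW m]
    exact measure_biUnion (W_countable m) (W_disj m) (fun w _ => measurableSet_cyl w)
  have key : ∀ m, P (Bad (m+1)) ≤ (1 - q) * P (Bad m) := by
    intro m
    have hsub : Bad (m+1) ⊆
        ⋃ w ∈ W m, (Cyl w \ Cyl (w ++ φ (apW f w x))) := by
      intro ω hω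
      have hωm : ω ∈ Bad m := by
        intro n hn1 hn2
        refine hω n hn1 (hn2.trans ?_)
        have : (m+1)*M = m*M + M := by ring
        omega
      rw [badW m] at hωm
      simp only [Set.mem_iUnion] at hωm
      obtain ⟨w, hwW, hωw⟩ := hωm
      simp only [Set.mem_iUnion]
      refine ⟨w, hwW, hωw, ?_⟩
      intro hcontra
      set z := apW f w x with hz
      set u := φ z with hu
      have hzU : z ∈ U := horb w (by rw [hwW.1]; exact Nat.le_add_right _ _)
      obtain ⟨huM, hu1, huV⟩ := hφ z hzU
      have hlen2 : (w ++ u).length = w.length + u.length := by simp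
      have hwof : wof ω (w.length + u.length) = w ++ u := by
        rw [wof_eq_take hcontra (by rw [hlen2])]
        simp
      have : apW f (wof ω (w.length + u.length)) x ∈ V := by
        rw [hwof, apW_append]; exact huV
      apply hω (w.length + u.length) ?_ ?_ this
      · rw [hwW.1]; omega
      · rw [hwW.1]
        have h1 : u.length ≤ M := huM
        have h2 : (m+1)*M = m*M + M := by ring
        omega
    calc P (Bad (m+1)) ≤ ∑' w : W m, P (Cyl (w:List (Fin k)) \ Cyl (w ++ φ (apW f w x))) := by
          refine (measure_mono hsub).trans ?_
          exact measure_biUnion_le P (W_countable m) _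
      _ ≤ ∑' w : W m, (1 - q) * P (Cyl (w:List (Fin k))) := by
          apply ENNReal.tsum_le_tsum
          intro w
          have hsub2 := cyl_append_subset (w:List (Fin k)) (φ (apW f w x))
          rw [measure_diff hsub2 (measurableSet_cyl _).nullMeasurableSet (measure_ne_top _ _)]
          have hlow : q * P (Cyl (w:List (Fin k)))
              ≤ P (Cyl ((w:List (Fin k)) ++ φ (apW f w x))) := by
            refine le_trans ?_ (cyl_measure_ext P p hP _ _)
            apply mul_le_mul_left
            rw [hq]
            apply pow_le_pow_of_le_one (zero_le) (by simpa [ENNReal.ofReal_le_one] using hp1)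
            have hzU : apW f w x ∈ U := horb w (by rw [w.2.1]; exact Nat.le_add_right _ _)
            exact (hφ _ hzU).1
          refine le_trans (tsub_le_tsub_left hlow _) ?_
          rw [tsub_le_iff_right]
          have heq : (1-q) * P (Cyl (w:List (Fin k))) + q * P (Cyl (w:List (Fin k)))
              = P (Cyl (w:List (Fin k))) := by
            rw [← add_mul, tsub_add_cancel_of_le hq1, one_mul]
          rw [heq]
      _ = (1 - q) * P (Bad m) := by
          rw [ENNReal.tsum_mul_left, badMeasEq m]
  have bound : ∀ m, P (Bad m) ≤ (1 - q)^m := by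
    intro m
    induction m with
    | zero => simpa using prob_le_one
    | succ m ih =>
      calc P (Bad (m+1)) ≤ (1-q) * P (Bad m) := key m
        _ ≤ (1-q) * (1-q)^m := mul_le_mul_right ih _
        _ = (1-q)^(m+1) := by rw [pow_succ, mul_comm]
  have hsubT : ∀ m, {ω : ℕ → Fin k | ∀ n, n₀ ≤ n → apW f (wof ω n) x ∉ V} ⊆ Bad m := by
    intro m ω hω n hn1 _; exact hω n hn1
  have htend : Tendsto (fun m => (1-q)^m) atTop (𝓝 0) :=
    ENNReal.tendsto_pow_atTop_nhds_zero_of_lt_one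
      (ENNReal.sub_lt_self ENNReal.one_ne_top one_ne_zero hq0)
  have : P {ω : ℕ → Fin k | ∀ n, n₀ ≤ n → apW f (wof ω n) x ∉ V} ≤ 0 :=
    ge_of_tendsto htend (Eventually.of_forall fun m =>
      le_trans (measure_mono (hsubT m)) (bound m))
  simpa using this

end PCG

end PCGAux

section PCGAux2

open MeasureTheory

namespace PCG

variable {X : Type*} {k : ℕ}

lemma perV [TopologicalSpace X] {f : Fin k → X → X} (hf : ∀ i, Continuous (f i))
    {A : Set X} (hA : IsCompact A)
    (hmin : ∀ x ∈ A, A ⊆ closure (GammaOrbit f x))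
    (P : Measure (ℕ → Fin k)) [IsProbabilityMeasure P]
    (p : ℝ) (hp0 : 0 < p) (hp1 : p ≤ 1)
    (hP : ∀ (w : List (Fin k)) (i : Fin k),
      ENNReal.ofReal p * P (Cyl w) ≤ P (Cyl (w ++ [i])))
    {x : X} (hx : x ∈ BasinP f A)
    {V : Set X} (hV : IsOpen V) (hVA : (V ∩ A).Nonempty) (N : ℕ) :
    P {ω | ∀ n, N ≤ n → apW f (wof ω n) x ∉ V} = 0 := by
  classical
  obtain ⟨a, haV, haA⟩ := hVA
  have hword : ∀ y : A, ∃ w : List (Fin k), w ≠ [] ∧ apW f w (y : X) ∈ V := by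
    intro y
    have hacl : a ∈ closure (GammaOrbit f (y : X)) := hmin y y.2 haA
    obtain ⟨z, hzV, g, hgsg, hgz⟩ := mem_closure_iff.1 hacl V hV haV
    obtain ⟨w, hwne, hww⟩ := semigroup_word f hgsg
    refine ⟨w, hwne, ?_⟩
    rw [← hww, hgz]
    exact hzV
  choose u hu1 hu2 using hword
  set Wt : A → Set X := fun y => (apW f (u y))⁻¹' V with hWt
  have hWopen : ∀ y, IsOpen (Wt y) := fun y => hV.preimage (continuous_apW hf _)
  have hcover : A ⊆ ⋃ y : A, Wt y := fun z hz => Set.mem_iUnion.2 ⟨⟨z, hz⟩, hu2 _⟩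
  obtain ⟨t, ht⟩ := hA.elim_finite_subcover Wt hWopen hcover
  set U : Set X := ⋃ y ∈ t, Wt y with hU
  have hUopen : IsOpen U := isOpen_biUnion fun y _ => hWopen y
  obtain ⟨y₀, hy₀t, -⟩ := Set.mem_iUnion₂.1 (ht haA)
  set M : ℕ := t.sup fun y => (u y).length with hM'
  have hM : 1 ≤ M := by
    have h1 : 0 < (u y₀).length := List.length_pos_iff.2 (hu1 y₀)
    have h2 : (u y₀).length ≤ M := Finset.le_sup (f := fun y => (u y).length) hy₀t
    omega
  have hφex : ∃ φ : X → List (Fin k),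
      ∀ z ∈ U, (φ z).length ≤ M ∧ 1 ≤ (φ z).length ∧ apW f (φ z) z ∈ V := by
    refine ⟨fun z => if h : ∃ y, y ∈ t ∧ z ∈ Wt y then u h.choose else [], ?_⟩
    intro z hz
    have h : ∃ y, y ∈ t ∧ z ∈ Wt y := by
      obtain ⟨y, hyt, hzy⟩ := Set.mem_iUnion₂.1 hz
      exact ⟨y, hyt, hzy⟩
    show ((if h : ∃ y, y ∈ t ∧ z ∈ Wt y then u h.choose else []).length ≤ M) ∧
      (1 ≤ (if h : ∃ y, y ∈ t ∧ z ∈ Wt y then u h.choose else []).length) ∧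
      apW f (if h : ∃ y, y ∈ t ∧ z ∈ Wt y then u h.choose else []) z ∈ V
    rw [dif_pos h]
    exact ⟨Finset.le_sup (f := fun y => (u y).length) h.choose_spec.1,
      List.length_pos_iff.2 (hu1 _), h.choose_spec.2⟩
  obtain ⟨φ, hφ⟩ := hφex
  obtain ⟨n₁, hn₁⟩ := hx U Set.univ hUopen ht isOpen_univ ⟨a, Set.mem_univ a, haA⟩
  have horb : ∀ w : List (Fin k), max n₁ N ≤ w.length → apW f w x ∈ U := by
    intro w hw
    have h1 : apW f w x ∈ (Hutch f)^[w.length] {x} :=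
      apW_mem_hutch f w {x} (Set.mem_singleton x)
    exact (hn₁ w.length (le_trans (le_max_left _ _) hw)).1 h1
  have h0 := core_estimate f P p hp0 hp1 hP x V U M (max n₁ N) hM φ hφ horb
  refine measure_mono_null ?_ h0
  intro ω hω n hn
  exact hω n (le_trans (le_max_right _ _) hn)

end PCG

end PCGAux2

open MeasureTheory in
theorem probabilistic_chaos_game
    {X : Type*} [TopologicalSpace X] [T2Space X] {k : ℕ} (hk : 0 < k)
    (f : Fin k → X → X) (hf : ∀ i, Continuous (f i))
    (A : Set X) (hA : IsCompact A) (hAne : A.Nonempty)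
    (hss : A = Hutch f A) (hmin : ∀ x ∈ A, A ⊆ closure (GammaOrbit f x))
    (hfc : FirstCountableTopology A)
    (P : Measure (ℕ → Fin k)) [IsProbabilityMeasure P]
    (p : ℝ) (hp0 : 0 < p) (hpk : p ≤ 1 / k)
    (hP : ∀ (w : List (Fin k)) (i : Fin k),
      ENNReal.ofReal p * P (Cyl w) ≤ P (Cyl (w ++ [i]))) :
    ∀ x ∈ BasinP f A, P {ω | A ⊆ closure (Oplus f ω x)} = 1 := by
  classical
  intro x hx
  haveI := hfc
  haveI : CompactSpace ↥A := isCompact_iff_compactSpace.mp hA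
  have hk1 : (1:ℝ) ≤ (k:ℝ) := by exact_mod_cast hk
  have hp1 : p ≤ 1 := hpk.trans (by rw [div_le_one (by linarith)]; exact hk1)
  obtain ⟨a₀, ha₀⟩ := hAne
  set D : Set X := GammaOrbit f a₀ with hD
  have hDA : D ⊆ A := by
    rintro y ⟨g, hg, rfl⟩
    obtain ⟨w, -, hw⟩ := PCG.semigroup_word f hg
    rw [hw]
    exact PCG.apW_mem_of_selfSimilar f hss w ha₀
  have hDcnt : D.Countable := by
    refine Set.Countable.mono ?_ (Set.countable_range (fun w : List (Fin k) => PCG.apW f w a₀))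
    rintro y ⟨g, hg, rfl⟩
    obtain ⟨w, -, hw⟩ := PCG.semigroup_word f hg
    exact ⟨w, (hw a₀).symm⟩
  haveI := hDcnt.to_subtype
  have hDd : A ⊆ closure D := hmin a₀ ha₀
  have hbas0 : ∀ b : ↥A, ∃ s : ℕ → Set ↥A, (𝓝 b).HasAntitoneBasis s :=
    fun b => (𝓝 b).exists_antitone_basis
  choose bas hbas using hbas0
  have hsep : ∀ (d : ↥D) (m : ℕ), ∃ VV WW : Set X, IsOpen VV ∧ IsOpen WW ∧
      (d : X) ∈ VV ∧ (Subtype.val '' (interior (bas ⟨(d:X), hDA d.2⟩ m))ᶜ) ⊆ WW ∧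
      Disjoint VV WW := by
    intro d m
    set dA : ↥A := ⟨(d:X), hDA d.2⟩ with hdA
    have hK2 : IsCompact (Subtype.val '' (interior (bas dA m))ᶜ) :=
      (isOpen_interior.isClosed_compl.isCompact).image continuous_subtype_val
    have hdmem : dA ∈ interior (bas dA m) :=
      mem_interior_iff_mem_nhds.2 ((hbas dA).toHasBasis.mem_of_mem trivial)
    have hdisj : Disjoint ({(d:X)} : Set X) (Subtype.val '' (interior (bas dA m))ᶜ) := by
      rw [Set.disjoint_left]
      rintro y hy ⟨b, hbB, hval⟩
      rw [Set.mem_singleton_iff] at hy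
      subst hy
      apply hbB
      have hb : b = dA := Subtype.ext hval
      rw [hb]
      exact hdmem
    obtain ⟨VV, WW, h1, h2, h3, h4, h5⟩ :=
      SeparatedNhds.of_isCompact_isCompact isCompact_singleton hK2 hdisj
    exact ⟨VV, WW, h1, h2, h3 rfl, h4, h5⟩
  choose Vf Wf hVo hWo hVd hWK hVW using hsep
  set G : Set (ℕ → Fin k) :=
    {ω | ∀ (d : ↥D) (m : ℕ) (N : ℕ), ∃ n, N ≤ n ∧ PCG.apW f (PCG.wof ω n) x ∈ Vf d m}
    with hG
  have hGc : P Gᶜ = 0 := by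
    have hsub : Gᶜ ⊆ ⋃ (d : ↥D), ⋃ (m : ℕ), ⋃ (N : ℕ),
        {ω | ∀ n, N ≤ n → PCG.apW f (PCG.wof ω n) x ∉ Vf d m} := by
      intro ω hω
      simp only [hG, Set.mem_compl_iff, Set.mem_setOf_eq] at hω
      push_neg at hω
      obtain ⟨d, m, N, hN⟩ := hω
      exact Set.mem_iUnion.2 ⟨d, Set.mem_iUnion.2 ⟨m, Set.mem_iUnion.2 ⟨N, hN⟩⟩⟩
    refine measure_mono_null hsub ?_
    refine measure_iUnion_null fun d => measure_iUnion_null fun m =>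
      measure_iUnion_null fun N => ?_
    exact PCG.perV hf hA hmin P p hp0 hp1 hP hx (hVo d m)
      ⟨(d : X), hVd d m, hDA d.2⟩ N
  have hG1 : (1:ENNReal) ≤ P G := by
    have h := measure_union_le (μ := P) G Gᶜ
    rw [Set.union_compl_self, measure_univ, hGc, add_zero] at h
    exact h
  have hGT : G ⊆ {ω | A ⊆ closure (Oplus f ω x)} := by
    intro ω hω
    intro a haA'
    rw [mem_closure_iff]
    intro N hNopen haN
    obtain ⟨d0, hd0N, hd0D⟩ := mem_closure_iff.1 (hDd haA') N hNopen haN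
    set d : ↥D := ⟨d0, hd0D⟩ with hd
    set dA : ↥A := ⟨(d : X), hDA d.2⟩ with hdA
    have hNo : IsOpen (Subtype.val ⁻¹' N : Set ↥A) :=
      hNopen.preimage continuous_subtype_val
    have hNn : (Subtype.val ⁻¹' N : Set ↥A) ∈ 𝓝 dA := hNo.mem_nhds hd0N
    obtain ⟨C, hCn, hCcl, hCN⟩ := exists_mem_nhds_isClosed_subset hNn
    obtain ⟨m, -, hsm⟩ := (hbas dA).toHasBasis.mem_iff.1 hCn
    have hU' : A ⊆ N ∪ Wf d m := by
      intro b hb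
      by_cases hbB : (⟨b, hb⟩ : ↥A) ∈ interior (bas dA m)
      · left
        exact hCN (hsm (interior_subset hbB))
      · right
        exact hWK d m ⟨⟨b, hb⟩, hbB, rfl⟩
    have hU'open : IsOpen (N ∪ Wf d m) := hNopen.union (hWo d m)
    obtain ⟨n₂, hn₂⟩ := hx (N ∪ Wf d m) Set.univ hU'open hU' isOpen_univ
      ⟨a₀, Set.mem_univ a₀, ha₀⟩
    obtain ⟨n, hn, hnV⟩ := hω d m (max n₂ 1)
    have hyU' : PCG.apW f (PCG.wof ω n) x ∈ N ∪ Wf d m := by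
      have h1 : PCG.apW f (PCG.wof ω n) x ∈ (Hutch f)^[n] {x} := by
        have h2 := PCG.apW_mem_hutch f (PCG.wof ω n) {x} (Set.mem_singleton x)
        rwa [PCG.wof_length] at h2
      exact (hn₂ n (le_trans (le_max_left _ _) hn)).1 h1
    have hyN : PCG.apW f (PCG.wof ω n) x ∈ N := by
      rcases hyU' with h | h
      · exact h
      · exact absurd h (Set.disjoint_left.1 (hVW d m) hnV)
    refine ⟨PCG.apW f (PCG.wof ω n) x, hyN, ?_⟩
    exact ⟨n, le_trans (le_max_right _ _) hn, PCG.fibIter_eq_apW f ω n x⟩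
  exact le_antisymm prob_le_one (hG1.trans (measure_mono hGT))
end

section
/- Let X be a compact Hausdorff topological space and f₁,…,f_k : X → X continuous maps. If there exists a sequence ω ∈ Ω such that O⁺_ω(x) is dense in X for every x ∈ X, then the IFS generated by f₁,…,f_k is backward minimal: the only nonempty closed set K ⊆ X with ∅ ≠ f⁻¹(K) ⊆ K for every f ∈ Γ is K = X. -/
open Set Filter Topology

theorem deterministic_chaos_game_implies_backward_minimal
    {X : Type*} [TopologicalSpace X] [T2Space X] [CompactSpace X] {k : ℕ}
    (f : Fin k → X → X) (hf : ∀ i, Continuous (f i))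
    (h : ∃ ω : ℕ → Fin k, ∀ x : X, Dense (Oplus f ω x)) :
    BackwardMinimal f := by
  obtain ⟨ω, hω⟩ := h
  intro B hBne hBcl hB
  -- each f_ω^{n+1} belongs to the semigroup
  have hmem : ∀ n : ℕ, FibIter f ω (n + 1) ∈ IFSsemigroup f := by
    intro n
    induction n with
    | zero =>
      exact ⟨[ω 0], by simp, by funext x; simp [FibIter]⟩
    | succ n ih =>
      obtain ⟨l, hl, hleq⟩ := ih
      refine ⟨ω (n + 1) :: l, by simp, ?_⟩
      simp only [List.map_cons, List.foldr_cons, ← hleq]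
      rfl
  have hcont : ∀ m : ℕ, Continuous (FibIter f ω m) := by
    intro m
    induction m with
    | zero => exact continuous_id
    | succ m ih => exact (hf (ω m)).comp ih
  set D : ℕ → Set X := fun n => FibIter f ω (n + 1) ⁻¹' B with hD
  have hDne : ∀ n, (D n).Nonempty := fun n => (hB _ (hmem n)).1
  have hDcl : ∀ n, IsClosed (D n) := fun n => hBcl.preimage (hcont (n + 1))
  have hDanti : ∀ n, D (n + 1) ⊆ D n := by
    intro n y hy
    have hsingle : f (ω (n + 1)) ∈ IFSsemigroup f :=
      ⟨[ω (n + 1)], by simp, by funext x; simp⟩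
    have h2 : f (ω (n + 1)) (FibIter f ω (n + 1) y) ∈ B := hy
    exact (hB _ hsingle).2 h2
  have hinter : (⋂ n, D n).Nonempty :=
    IsCompact.nonempty_iInter_of_sequence_nonempty_isCompact_isClosed
      D hDanti hDne ((hDcl 0).isCompact) hDcl
  obtain ⟨y, hy⟩ := hinter
  have horb : Oplus f ω y ⊆ B := by
    rintro z ⟨m, hm1, rfl⟩
    obtain ⟨j, rfl⟩ := Nat.exists_eq_add_of_le hm1
    have := Set.mem_iInter.mp hy j
    simpa [D, Nat.add_comm] using this
  have : (Set.univ : Set X) ⊆ B := by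
    calc (Set.univ : Set X) = closure (Oplus f ω y) := ((hω y).closure_eq).symm
      _ ⊆ closure B := closure_mono horb
      _ = B := hBcl.closure_eq
  exact Set.eq_univ_of_univ_subset this
end

section
/- There exist finitely many homeomorphisms f₁,…,f_k of the circle S¹ such that the IFS they generate is forward minimal but not backward minimal. -/
open Set Filter Topology

section IFSXdev




namespace IFSX

def CS : ℕ → Set ℝ
  | 0 => Icc 0 1
  | n+1 => (fun x => x/3) '' CS n ∪ (fun x => (x+2)/3) '' CS n

def C : Set ℝ := ⋂ n, CS n

lemma CS_subset_Icc : ∀ n, CS n ⊆ Icc 0 1 := by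
  intro n
  induction n with
  | zero => exact le_refl _
  | succ m ih =>
    rintro x (⟨y, hy, rfl⟩ | ⟨y, hy, rfl⟩) <;>
      · obtain ⟨h1, h2⟩ := ih hy
        constructor <;> [linarith; linarith]

lemma C_subset_Icc : C ⊆ Icc 0 1 := fun x hx => CS_subset_Icc 0 (by exact mem_iInter.mp hx 0)

lemma mem_C_iff {x : ℝ} : x ∈ C ↔ ∀ n, x ∈ CS n := mem_iInter

lemma div3_mem_C {c : ℝ} (hc : c ∈ C) : c/3 ∈ C := by
  rw [mem_C_iff] at *
  intro n
  cases n with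
  | zero =>
    obtain ⟨h1, h2⟩ := C_subset_Icc (mem_C_iff.mpr hc)
    exact ⟨by linarith, by linarith⟩
  | succ m => exact Or.inl ⟨c, hc m, rfl⟩

lemma add_two_div3_mem_C {c : ℝ} (hc : c ∈ C) : (c+2)/3 ∈ C := by
  rw [mem_C_iff] at *
  intro n
  cases n with
  | zero =>
    obtain ⟨h1, h2⟩ := C_subset_Icc (mem_C_iff.mpr hc)
    exact ⟨by linarith, by linarith⟩
  | succ m => exact Or.inr ⟨c, hc m, rfl⟩

lemma zero_mem_C : (0:ℝ) ∈ C := by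
  rw [mem_C_iff]
  intro n
  induction n with
  | zero => exact ⟨le_refl _, zero_le_one⟩
  | succ m ih => exact Or.inl ⟨0, ih, by norm_num⟩

lemma C_trichotomy {c : ℝ} (hc : c ∈ C) : 3*c ∈ C ∨ 3*c - 2 ∈ C := by
  rw [mem_C_iff] at hc
  by_cases h : c < 2/3
  · left
    rw [mem_C_iff]
    intro n
    rcases hc (n+1) with ⟨y, hy, hxy⟩ | ⟨y, hy, hxy⟩
    · have : y = 3*c := by dsimp at hxy; linarith
      rwa [← this]
    · exfalso
      obtain ⟨h1, _⟩ := CS_subset_Icc n hy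
      dsimp at hxy
      linarith
  · right
    rw [mem_C_iff]
    intro n
    rcases hc (n+1) with ⟨y, hy, hxy⟩ | ⟨y, hy, hxy⟩
    · exfalso
      obtain ⟨_, h2⟩ := CS_subset_Icc n hy
      dsimp at hxy
      linarith
    · have : y = 3*c - 2 := by dsimp at hxy; linarith
      rwa [← this]

lemma CS_closed : ∀ n, IsClosed (CS n) := by
  intro n
  induction n with
  | zero => exact isClosed_Icc
  | succ m ih =>
    have h1 : (fun x : ℝ => x/3) '' CS m = (fun y : ℝ => 3*y) ⁻¹' CS m := by
      ext x; constructor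
      · rintro ⟨y, hy, rfl⟩; simpa using (by rw [show 3*(y/3) = y by ring]; exact hy)
      · intro hx; exact ⟨3*x, hx, by ring⟩
    have h2 : (fun x : ℝ => (x+2)/3) '' CS m = (fun y : ℝ => 3*y - 2) ⁻¹' CS m := by
      ext x; constructor
      · rintro ⟨y, hy, rfl⟩; simpa using (by rw [show 3*((y+2)/3) - 2 = y by ring]; exact hy)
      · intro hx; exact ⟨3*x - 2, hx, by ring⟩
    rw [show CS (m+1) = (fun x : ℝ => x/3) '' CS m ∪ (fun x : ℝ => (x+2)/3) '' CS m from rfl,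
      h1, h2]
    exact IsClosed.union (ih.preimage (by continuity)) (ih.preimage (by continuity))

lemma C_closed : IsClosed C := isClosed_iInter CS_closed

lemma C_compact : IsCompact C := isCompact_Icc.of_isClosed_subset C_closed C_subset_Icc

end IFSX

namespace IFSX

noncomputable def H0 : ℝ → ℝ := fun x =>
  if x ≤ 1/4 then 3*x
  else if x ≤ 5/16 then x + 1/2
  else if x ≤ 1/2 then x/9 + 7/9
  else if x ≤ 5/8 then x/3 + 2/3
  else if x ≤ 11/16 then x + 1/4
  else if x ≤ 7/8 then x/9 + 31/36
  else x/3 + 2/3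

lemma H0_continuous : Continuous H0 := by
  unfold H0
  apply Continuous.if_le
  · exact continuous_const.mul continuous_id
  · apply Continuous.if_le
    · exact continuous_id.add continuous_const
    · apply Continuous.if_le
      · exact (continuous_id.div_const _).add continuous_const
      · apply Continuous.if_le
        · exact (continuous_id.div_const _).add continuous_const
        · apply Continuous.if_le
          · exact continuous_id.add continuous_const
          · apply Continuous.if_le
            · exact (continuous_id.div_const _).add continuous_const
            · exact (continuous_id.div_const _).add continuous_const
            · exact continuous_id
            · exact continuous_const
            · intro x hx; rw [hx]; norm_num
          · exact continuous_id
          · exact continuous_const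
          · intro x hx; rw [hx]; norm_num
        · exact continuous_id
        · exact continuous_const
        · intro x hx; rw [hx]; norm_num
      · exact continuous_id
      · exact continuous_const
      · intro x hx; rw [hx]; norm_num
    · exact continuous_id
    · exact continuous_const
    · intro x hx; rw [hx]; norm_num
  · exact continuous_id
  · exact continuous_const
  · intro x hx; rw [hx]; norm_num

set_option maxHeartbeats 2000000 in
lemma H0_strictMono : StrictMono H0 := by
  intro x y hxy
  unfold H0
  split_ifs <;> linarith

lemma H0_zero : H0 0 = 0 := by norm_num [H0]
lemma H0_one : H0 1 = 1 := by norm_num [H0]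

noncomputable def H : ℝ → ℝ := fun x => x + (H0 (Int.fract x) - Int.fract x)

lemma H_continuous : Continuous H := by
  have hg : Continuous ((fun t : ℝ => H0 t - t) ∘ Int.fract) := by
    apply ContinuousOn.comp_fract''
    · exact (H0_continuous.sub continuous_id).continuousOn
    · simp [H0_zero, H0_one]
  exact continuous_id.add hg

lemma H_floor (x : ℝ) : H x = ⌊x⌋ + H0 (Int.fract x) := by
  unfold H
  rw [Int.fract]; ring

lemma H_add_int (x : ℝ) (n : ℤ) : H (x + n) = H x + n := by
  unfold H
  rw [Int.fract_add_intCast]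
  ring

lemma H_int (n : ℤ) : H (n : ℝ) = n := by
  have := H_add_int 0 n
  simpa [H, Int.fract_zero, H0_zero] using this

lemma H_strictMono : StrictMono H := by
  intro x y hxy
  rw [H_floor, H_floor]
  rcases lt_trichotomy (⌊x⌋) (⌊y⌋) with h | h | h
  · have h1 : H0 (Int.fract x) < 1 := by
      have : Int.fract x < 1 := Int.fract_lt_one x
      calc H0 (Int.fract x) < H0 1 := H0_strictMono this
        _ = 1 := H0_one
    have h2 : (0:ℝ) ≤ H0 (Int.fract y) := by
      rcases eq_or_lt_of_le (Int.fract_nonneg y) with h' | h'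
      · rw [← h', H0_zero]
      · rw [← H0_zero]; exact le_of_lt (H0_strictMono h')
    have : (⌊x⌋ : ℝ) + 1 ≤ ⌊y⌋ := by exact_mod_cast Int.add_one_le_iff.mpr h
    linarith
  · have : Int.fract x < Int.fract y := by
      unfold Int.fract; rw [h]; linarith
    have := H0_strictMono this
    rw [h]
    linarith
  · exfalso
    have := Int.floor_le_floor (le_of_lt hxy)
    omega

lemma H_surjective : Function.Surjective H := by
  intro y
  have h1 : H (⌊y⌋ : ℝ) = ⌊y⌋ := H_int _
  have h2 : H ((⌊y⌋ : ℝ) + 1) = ⌊y⌋ + 1 := by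
    have := H_add_int (⌊y⌋ : ℝ) 1
    rw [H_int] at this; push_cast at this; push_cast; linarith
  have hy : y ∈ Icc (H (⌊y⌋ : ℝ)) (H ((⌊y⌋:ℝ)+1)) := by
    rw [h1, h2]
    exact ⟨Int.floor_le y, by linarith [Int.lt_floor_add_one y]⟩
  have := intermediate_value_Icc (by linarith : (⌊y⌋:ℝ) ≤ (⌊y⌋:ℝ)+1) H_continuous.continuousOn
  obtain ⟨x, _, hx⟩ := this hy
  exact ⟨x, hx⟩

lemma H_eq_H0 {x : ℝ} (h0 : 0 ≤ x) (h1 : x ≤ 1) : H x = H0 x := by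
  rcases eq_or_lt_of_le h1 with rfl | h1'
  · rw [H0_one]
    have := H_int 1
    simpa using this
  · rw [H_floor, Int.fract_eq_self.mpr ⟨h0, h1'⟩, Int.floor_eq_zero_iff.mpr ⟨h0, h1'⟩]
    norm_num

end IFSX


namespace IFSX

lemma H0_eqA {x : ℝ} (h : x ≤ 1/4) : H0 x = 3*x := by
  unfold H0; rw [if_pos h]

lemma H0_eqB {x : ℝ} (h1 : 5/16 ≤ x) (h2 : x ≤ 1/2) : H0 x = x/9 + 7/9 := by
  unfold H0; split_ifs <;> linarith

lemma H0_eqC {x : ℝ} (h1 : 1/2 ≤ x) (h2 : x ≤ 5/8) : H0 x = x/3 + 2/3 := by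
  unfold H0; split_ifs <;> linarith

lemma H0_eqD {x : ℝ} (h1 : 11/16 ≤ x) (h2 : x ≤ 7/8) : H0 x = x/9 + 31/36 := by
  unfold H0; split_ifs <;> linarith

lemma H0_eqE {x : ℝ} (h1 : 7/8 ≤ x) : H0 x = x/3 + 2/3 := by
  unfold H0; split_ifs <;> linarith

/-- The backward-invariant Cantor-type set (as a subset of `[0,1] ⊆ ℝ`). -/
def BR : Set ℝ := {x | ∃ j : Fin 8, ∃ c ∈ C, x = (2*(j:ℝ)+1)/16 + c/16}

lemma BR_subset {x : ℝ} (hx : x ∈ BR) : 1/16 ≤ x ∧ x ≤ 1 := by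
  obtain ⟨j, c, hc, rfl⟩ := hx
  obtain ⟨hc0, hc1⟩ := C_subset_Icc hc
  have hj : (j:ℝ) ≤ 7 := by
    have := j.is_lt
    exact_mod_cast Nat.lt_succ_iff.mp this
  have hj0 : (0:ℝ) ≤ (j:ℝ) := by positivity
  constructor <;> nlinarith


lemma mem_BR_intro (jv : ℕ) (hj : jv < 8) {c x : ℝ} (hc : c ∈ C)
    (hx : x = (2*(jv:ℝ)+1)/16 + c/16) : x ∈ BR := by
  refine ⟨⟨jv, hj⟩, c, hc, ?_⟩
  simp only [Fin.val_mk]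
  exact hx

lemma H_mem_BR {x : ℝ} (hx : x ∈ BR) : H x ∈ BR := by
  obtain ⟨j, c, hc, rfl⟩ := hx
  obtain ⟨hc0, hc1⟩ := C_subset_Icc hc
  have hH0 : ∀ y : ℝ, 0 ≤ y → y ≤ 1 → H y = H0 y := fun y h1 h2 => H_eq_H0 h1 h2
  fin_cases j
  · -- j = 0 : x ∈ [1/16, 2/16]
    rw [hH0 _ (by norm_num; linarith) (by norm_num; linarith),
      H0_eqA (by norm_num; linarith)]
    rcases C_trichotomy hc with hd | hd
    · exact mem_BR_intro 1 (by norm_num) hd (by norm_num; ring)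
    · exact mem_BR_intro 2 (by norm_num) hd (by norm_num; ring)
  · -- j = 1
    rw [hH0 _ (by norm_num; linarith) (by norm_num; linarith),
      H0_eqA (by norm_num; linarith)]
    rcases C_trichotomy hc with hd | hd
    · exact mem_BR_intro 4 (by norm_num) hd (by norm_num; ring)
    · exact mem_BR_intro 5 (by norm_num) hd (by norm_num; ring)
  · -- j = 2
    rw [hH0 _ (by norm_num; linarith) (by norm_num; linarith),
      H0_eqB (by norm_num; linarith) (by norm_num; linarith)]
    exact mem_BR_intro 6 (by norm_num) (div3_mem_C (div3_mem_C hc)) (by norm_num; ring)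
  · -- j = 3
    rw [hH0 _ (by norm_num; linarith) (by norm_num; linarith),
      H0_eqB (by norm_num; linarith) (by norm_num; linarith)]
    exact mem_BR_intro 6 (by norm_num) (div3_mem_C (add_two_div3_mem_C hc)) (by norm_num; ring)
  · -- j = 4
    rw [hH0 _ (by norm_num; linarith) (by norm_num; linarith),
      H0_eqC (by norm_num; linarith) (by norm_num; linarith)]
    exact mem_BR_intro 6 (by norm_num) (add_two_div3_mem_C hc) (by norm_num; ring)
  · -- j = 5
    rw [hH0 _ (by norm_num; linarith) (by norm_num; linarith),
      H0_eqD (by norm_num; linarith) (by norm_num; linarith)]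
    exact mem_BR_intro 7 (by norm_num) (div3_mem_C (div3_mem_C hc)) (by norm_num; ring)
  · -- j = 6
    rw [hH0 _ (by norm_num; linarith) (by norm_num; linarith),
      H0_eqD (by norm_num; linarith) (by norm_num; linarith)]
    exact mem_BR_intro 7 (by norm_num) (div3_mem_C (add_two_div3_mem_C hc)) (by norm_num; ring)
  · -- j = 7
    rw [hH0 _ (by norm_num; linarith) (by norm_num; linarith),
      H0_eqE (by norm_num; linarith)]
    exact mem_BR_intro 7 (by norm_num) (add_two_div3_mem_C hc) (by norm_num; ring)

lemma BR_rot {x : ℝ} (hx : x ∈ BR) : x + 1/8 ∈ BR ∨ x + 1/8 - 1 ∈ BR := by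
  obtain ⟨⟨jv, hjv⟩, c, hc, rfl⟩ := hx
  by_cases hj : jv < 7
  · left
    refine ⟨⟨jv+1, by omega⟩, c, hc, ?_⟩
    simp only [Fin.val_mk]
    push_cast
    ring
  · right
    have hjv7 : jv = 7 := by omega
    refine ⟨⟨0, by norm_num⟩, c, hc, ?_⟩
    subst hjv7
    simp only [Fin.val_mk]
    push_cast
    ring

lemma BR_rot' {x : ℝ} (hx : x ∈ BR) : x - 1/8 ∈ BR ∨ x - 1/8 + 1 ∈ BR := by
  obtain ⟨⟨jv, hjv⟩, c, hc, rfl⟩ := hx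
  by_cases hj : 1 ≤ jv
  · left
    refine ⟨⟨jv-1, by omega⟩, c, hc, ?_⟩
    simp only [Fin.val_mk]
    push_cast [Nat.cast_sub hj]
    ring
  · right
    have hjv0 : jv = 0 := by omega
    refine ⟨⟨7, by norm_num⟩, c, hc, ?_⟩
    subst hjv0
    simp only [Fin.val_mk]
    push_cast
    ring

lemma BR_closed : IsClosed BR := by
  have : BR = ⋃ j : Fin 8, (fun c => (2*(j:ℝ)+1)/16 + c/16) '' C := by
    ext x
    simp only [mem_iUnion, mem_image, BR, mem_setOf_eq]
    constructor
    · rintro ⟨j, c, hc, rfl⟩; exact ⟨j, c, hc, rfl⟩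
    · rintro ⟨j, c, hc, rfl⟩; exact ⟨j, c, hc, rfl⟩
  rw [this]
  apply isClosed_iUnion_of_finite
  intro j
  have : IsCompact ((fun c => (2*(j:ℝ)+1)/16 + c/16) '' C) :=
    (C_compact.image (by continuity))
  exact this.isClosed

lemma BR_mem_base : (1/16 : ℝ) ∈ BR := mem_BR_intro 0 (by norm_num) zero_mem_C (by norm_num)

end IFSX






namespace IFSX

abbrev T1 := AddCircle (1:ℝ)

lemma coe_T1_add (a b : ℝ) : ((a + b : ℝ) : T1) = (a : T1) + (b : T1) := rfl

lemma H_descent {a b : ℝ} (h : -a + b ∈ AddSubgroup.zmultiples (1:ℝ)) :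
    ((H a : ℝ) : T1) = ((H b : ℝ) : T1) := by
  obtain ⟨n, hn⟩ := AddSubgroup.mem_zmultiples_iff.mp h
  have hb : b = a + n := by
    have : (n:ℝ) = -a + b := by rw [← hn]; simp
    linarith
  rw [QuotientAddGroup.eq]
  refine AddSubgroup.mem_zmultiples_iff.mpr ⟨n, ?_⟩
  rw [hb, H_add_int]
  simp

noncomputable def Hbar : T1 → T1 := fun q =>
  Quotient.liftOn' q (fun x => ((H x : ℝ) : T1)) (by
    intro a b hab
    exact H_descent ((QuotientAddGroup.leftRel_apply).mp hab))

lemma Hbar_coe (x : ℝ) : Hbar (x : T1) = ((H x : ℝ) : T1) := rfl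

lemma Hbar_continuous : Continuous Hbar :=
  Continuous.quotient_liftOn' ((AddCircle.continuous_mk' 1).comp H_continuous) _

noncomputable def Hoi : ℝ ≃o ℝ := StrictMono.orderIsoOfSurjective H H_strictMono H_surjective

lemma Hoi_apply (x : ℝ) : Hoi x = H x := rfl

noncomputable def Ginv : ℝ → ℝ := fun y => Hoi.symm y

lemma H_Ginv (y : ℝ) : H (Ginv y) = y :=
  Hoi.apply_symm_apply y

lemma Ginv_H (x : ℝ) : Ginv (H x) = x :=
  Hoi.symm_apply_apply x

lemma Ginv_continuous : Continuous Ginv := by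
  have : Continuous (Hoi.toHomeomorph.symm) := Homeomorph.continuous _
  exact this

lemma Ginv_add_int (x : ℝ) (n : ℤ) : Ginv (x + n) = Ginv x + n := by
  have hinj : Function.Injective H := H_strictMono.injective
  apply hinj
  rw [H_Ginv, H_add_int, H_Ginv]

lemma G_descent {a b : ℝ} (h : -a + b ∈ AddSubgroup.zmultiples (1:ℝ)) :
    ((Ginv a : ℝ) : T1) = ((Ginv b : ℝ) : T1) := by
  obtain ⟨n, hn⟩ := AddSubgroup.mem_zmultiples_iff.mp h
  have hb : b = a + n := by
    have : (n:ℝ) = -a + b := by rw [← hn]; simp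
    linarith
  rw [QuotientAddGroup.eq]
  refine AddSubgroup.mem_zmultiples_iff.mpr ⟨n, ?_⟩
  rw [hb, Ginv_add_int]
  simp

noncomputable def Gbar : T1 → T1 := fun q =>
  Quotient.liftOn' q (fun x => ((Ginv x : ℝ) : T1)) (by
    intro a b hab
    exact G_descent ((QuotientAddGroup.leftRel_apply).mp hab))

lemma Gbar_coe (x : ℝ) : Gbar (x : T1) = ((Ginv x : ℝ) : T1) := rfl

lemma Gbar_continuous : Continuous Gbar :=
  Continuous.quotient_liftOn' ((AddCircle.continuous_mk' 1).comp Ginv_continuous) _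

/-- The expanding circle homeomorphism. -/
noncomputable def homeoH : T1 ≃ₜ T1 where
  toFun := Hbar
  invFun := Gbar
  left_inv := by
    intro q
    induction q using QuotientAddGroup.induction_on with
    | H x => rw [Hbar_coe, Gbar_coe, Ginv_H]
  right_inv := by
    intro q
    induction q using QuotientAddGroup.induction_on with
    | H x => rw [Gbar_coe, Hbar_coe, H_Ginv]
  continuous_toFun := Hbar_continuous
  continuous_invFun := Gbar_continuous

/-- The rotation by 1/8. -/
noncomputable def rot : T1 ≃ₜ T1 := Homeomorph.addRight (((1:ℝ)/8 : ℝ) : T1)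

lemma rot_apply (q : T1) : rot q = q + (((1:ℝ)/8 : ℝ) : T1) := rfl

/-- The model IFS on `AddCircle 1`. -/
noncomputable def Fmodel : Fin 2 → T1 → T1 := ![⇑rot, ⇑homeoH.symm]

end IFSX

namespace IFSX

lemma coe_congr {a b : ℝ} (h : a = b) : ((a : ℝ) : T1) = ((b : ℝ) : T1) := by rw [h]

lemma int_coe_zero (k : ℤ) : (((k:ℝ)) : T1) = 0 := by
  rw [QuotientAddGroup.eq_zero_iff]
  exact AddSubgroup.mem_zmultiples_iff.mpr ⟨k, by simp⟩

lemma add_one_self (q : T1) : q + (((1:ℝ)) : T1) = q := by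
  have : (((1:ℝ)) : T1) = 0 := by
    have := int_coe_zero 1
    simpa using this
  rw [this, add_zero]

lemma shift_nat {S : Set T1} (hS : ∀ q ∈ S, q + (((1:ℝ)/8 : ℝ) : T1) ∈ S) :
    ∀ m : ℕ, ∀ q ∈ S, q + ((((m:ℝ)/8 : ℝ)) : T1) ∈ S := by
  intro m
  induction m with
  | zero => intro q hq; simpa using hq
  | succ n ih =>
    intro q hq
    have h1 : (((n:ℝ)+1)/8 : ℝ) = ((n:ℝ)/8) + (1/8 : ℝ) := by ring
    have : q + ((((n+1:ℕ):ℝ)/8 : ℝ) : T1)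
        = (q + (((n:ℝ)/8 : ℝ) : T1)) + (((1:ℝ)/8 : ℝ) : T1) := by
      rw [add_assoc, ← coe_T1_add]
      exact congrArg (fun r : T1 => q + r) (coe_congr (by push_cast; ring))
    rw [this]
    exact hS _ (ih q hq)

lemma shift_int {S : Set T1} (hS : ∀ q ∈ S, q + (((1:ℝ)/8 : ℝ) : T1) ∈ S) :
    ∀ n : ℤ, ∀ q ∈ S, q + ((((n:ℝ)/8 : ℝ)) : T1) ∈ S := by
  intro n q hq
  have h8 : (0:ℤ) < 8 := by norm_num
  have hmod : 0 ≤ n % 8 := Int.emod_nonneg n (by norm_num)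
  have hdiv : n = 8 * (n / 8) + n % 8 := (Int.mul_ediv_add_emod n 8).symm
  have hco : ((((n:ℝ)/8 : ℝ)) : T1) = ((((n % 8:ℤ):ℝ)/8 : ℝ) : T1) := by
    rw [QuotientAddGroup.eq]
    refine AddSubgroup.mem_zmultiples_iff.mpr ⟨-(n/8), ?_⟩
    have : ((n:ℝ)) = 8 * ((n/8 : ℤ):ℝ) + ((n % 8 : ℤ):ℝ) := by
      exact_mod_cast congrArg (fun z : ℤ => (z:ℝ)) hdiv
    simp only [zsmul_eq_mul]
    push_cast
    nlinarith [this]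
  rw [hco]
  have := shift_nat hS (n % 8).toNat q hq
  rwa [show (((n % 8).toNat : ℝ)) = (((n % 8 : ℤ)):ℝ) by
    exact_mod_cast congrArg (fun z : ℤ => (z:ℝ)) (Int.toNat_of_nonneg hmod)] at this

/-- interval-in-open-set property -/
def P (U : Set T1) (s : ℝ) : Prop := ∃ t : ℝ, (fun x : ℝ => (x : T1)) '' Ioo t (t+s) ⊆ U

lemma P_step {U : Set T1} (hU1 : ∀ q ∈ U, q + (((1:ℝ)/8 : ℝ) : T1) ∈ U)
    (hU2 : ∀ q ∈ U, Hbar q ∈ U) {s : ℝ} (hs0 : 0 < s) (hs : s ≤ 1/8) (hP : P U s) :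
    P U (3*s) := by
  obtain ⟨t, ht⟩ := hP
  obtain ⟨m, hm⟩ : ∃ m : ℤ, m = ⌊8*t⌋ := ⟨⌊8*t⌋, rfl⟩
  obtain ⟨t', ht'⟩ : ∃ t' : ℝ, t' = t - (m:ℝ)/8 := ⟨_, rfl⟩
  have hmle : (m:ℝ) ≤ 8*t := by rw [hm]; exact Int.floor_le _
  have hmgt : 8*t < (m:ℝ) + 1 := by rw [hm]; exact Int.lt_floor_add_one _
  have ht'0 : 0 ≤ t' := by rw [ht']; linarith
  have ht'1 : t' < 1/8 := by rw [ht']; linarith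
  have hsub : ∀ y : ℝ, t' < y → y < t' + s → ((y:ℝ) : T1) ∈ U := by
    intro y hy1' hy2'
    have hy1 : t < y + (m:ℝ)/8 := by rw [ht'] at hy1'; linarith
    have hy2 : y + (m:ℝ)/8 < t + s := by rw [ht'] at hy2'; linarith
    have hmem : ((y + (m:ℝ)/8 : ℝ) : T1) ∈ U := ht ⟨y + (m:ℝ)/8, ⟨hy1, hy2⟩, rfl⟩
    have hrw : ((y : ℝ) : T1) = ((y + (m:ℝ)/8 : ℝ) : T1) + ((((-m:ℤ):ℝ)/8 : ℝ) : T1) := by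
      rw [← coe_T1_add]
      exact coe_congr (by push_cast; ring)
    rw [hrw]
    exact shift_int hU1 (-m) _ hmem
  refine ⟨3*t', ?_⟩
  rintro z ⟨w, hw, rfl⟩
  obtain ⟨hw1, hw2⟩ := hw
  have hy1 : t' < w/3 := by linarith
  have hy2 : w/3 < t' + s := by linarith
  have hy0 : 0 ≤ w/3 := le_trans ht'0 (le_of_lt hy1)
  have hyle : w/3 ≤ 1 := by linarith
  have hH : H (w/3) = w := by
    rw [H_eq_H0 hy0 hyle, H0_eqA (by linarith)]
    ring
  have hmem : ((w/3 : ℝ) : T1) ∈ U := hsub _ hy1 hy2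
  have hfin : Hbar ((w/3 : ℝ) : T1) ∈ U := hU2 _ hmem
  rw [Hbar_coe, hH] at hfin
  exact hfin

lemma P_big {U : Set T1} (hU1 : ∀ q ∈ U, q + (((1:ℝ)/8 : ℝ) : T1) ∈ U)
    (hU2 : ∀ q ∈ U, Hbar q ∈ U) {s₀ : ℝ} (hs0 : 0 < s₀) (hs : s₀ ≤ 1/8) (hP : P U s₀) :
    ∃ s : ℝ, 1/8 < s ∧ s ≤ 3/8 ∧ P U s := by
  have key : ∀ n : ℕ, (3^n * s₀ ≤ 3/8 ∧ P U (3^n * s₀)) ∨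
      (∃ s : ℝ, 1/8 < s ∧ s ≤ 3/8 ∧ P U s) := by
    intro n
    induction n with
    | zero => exact Or.inl ⟨by simpa using le_trans hs (by norm_num), by simpa using hP⟩
    | succ k ih =>
      rcases ih with ⟨hb, hp⟩ | h
      · by_cases hle : 3^k * s₀ ≤ 1/8
        · left
          constructor
          · rw [pow_succ]
            nlinarith
          · have := P_step hU1 hU2 (by positivity) hle hp
            have h2 : (3:ℝ)^(k+1)*s₀ = 3*(3^k*s₀) := by ring
            rw [h2]
            exact this
        · right
          exact ⟨3^k * s₀, lt_of_not_ge hle, hb, hp⟩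
      · exact Or.inr h
  obtain ⟨n, hn⟩ := pow_unbounded_of_one_lt ((3/8)/s₀) (by norm_num : (1:ℝ) < 3)
  rcases key n with ⟨hb, _⟩ | h
  · exfalso
    have : (3:ℝ)^n * s₀ > 3/8 := by
      rw [gt_iff_lt, ← div_lt_iff₀ hs0] at *
      linarith [hn]
    linarith
  · exact h

theorem model_forward (B : Set T1) (hne : B.Nonempty) (hcl : IsClosed B)
    (hrot : (⇑rot) '' B ⊆ B) (hf : (⇑homeoH.symm) '' B ⊆ B) : B = univ := by
  by_contra hBu
  set U := Bᶜ with hUdef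
  have hUo : IsOpen U := hcl.isOpen_compl
  have hUne : U.Nonempty := Set.nonempty_compl.mpr hBu
  have hB1 : ∀ q ∈ B, q + (((1:ℝ)/8 : ℝ) : T1) ∈ B := by
    intro q hq
    exact hrot ⟨q, hq, rfl⟩
  have hU1 : ∀ q ∈ U, q + (((1:ℝ)/8 : ℝ) : T1) ∈ U := by
    intro q hq
    by_contra h
    have hqB : q + (((1:ℝ)/8 : ℝ) : T1) ∈ B := not_not.mp (by simpa [hUdef] using h)
    have h7 := shift_nat hB1 7 _ hqB
    have heq : (q + (((1:ℝ)/8 : ℝ) : T1)) + ((((7:ℕ):ℝ)/8 : ℝ) : T1) = q := by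
      rw [add_assoc, ← coe_T1_add]
      rw [coe_congr (show (1:ℝ)/8 + ((7:ℕ):ℝ)/8 = (1:ℝ) by push_cast; ring)]
      exact add_one_self q
    rw [heq] at h7
    exact hq h7
  have hU2 : ∀ q ∈ U, Hbar q ∈ U := by
    intro q hq
    by_contra h
    have hqB : Hbar q ∈ B := not_not.mp (by simpa [hUdef] using h)
    have : homeoH.symm (Hbar q) ∈ B := hf ⟨Hbar q, hqB, rfl⟩
    have heq : homeoH.symm (Hbar q) = q := homeoH.symm_apply_apply q
    rw [heq] at this
    exact hq this
  -- seed interval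
  obtain ⟨q₀, hq₀⟩ := hUne
  obtain ⟨x, rfl⟩ := Quotient.exists_rep q₀
  have hx : x ∈ (fun x : ℝ => (x : T1)) ⁻¹' U := hq₀
  have hpre : IsOpen ((fun x : ℝ => (x : T1)) ⁻¹' U) := hUo.preimage (AddCircle.continuous_mk' 1)
  obtain ⟨ε, hε, hball⟩ := Metric.isOpen_iff.mp hpre x hx
  set s₀ : ℝ := min ε (1/8) with hs₀def
  have hs₀pos : 0 < s₀ := lt_min hε (by norm_num)
  have hs₀le : s₀ ≤ 1/8 := min_le_right _ _
  have hseed : P U s₀ := by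
    refine ⟨x - s₀, ?_⟩
    rintro z ⟨y, hy, rfl⟩
    apply hball
    rw [Metric.mem_ball, Real.dist_eq, abs_lt]
    obtain ⟨h1, h2⟩ := hy
    constructor <;> linarith [min_le_left ε (1/8 : ℝ)]
  obtain ⟨s, hs1, hs2, t, ht⟩ := P_big hU1 hU2 hs₀pos hs₀le hseed
  -- U is everything
  have huniv : ∀ q : T1, q ∈ U := by
    intro q
    obtain ⟨y, rfl⟩ := Quotient.exists_rep q
    set j : ℤ := ⌊8*(t - y)⌋ + 1 with hj
    have hfl1 : ((⌊8*(t-y)⌋ : ℤ):ℝ) ≤ 8*(t-y) := Int.floor_le _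
    have hfl2 : 8*(t-y) < ((⌊8*(t-y)⌋ : ℤ):ℝ) + 1 := Int.lt_floor_add_one _
    have hj1 : t < y + (j:ℝ)/8 := by
      rw [hj]; push_cast; linarith
    have hj2 : y + (j:ℝ)/8 < t + s := by
      rw [hj]; push_cast; linarith
    have hmem : ((y + (j:ℝ)/8 : ℝ) : T1) ∈ U := ht ⟨y + (j:ℝ)/8, ⟨hj1, hj2⟩, rfl⟩
    have hrw : ((y : ℝ) : T1) = ((y + (j:ℝ)/8 : ℝ) : T1) + ((((-j:ℤ):ℝ)/8 : ℝ) : T1) := by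
      rw [← coe_T1_add]
      exact coe_congr (by push_cast; ring)
    have : ((y:ℝ) : T1) ∈ U := by
      rw [hrw]
      exact shift_int hU1 (-j) _ hmem
    exact this
  obtain ⟨b, hb⟩ := hne
  exact (huniv b) hb

end IFSX

namespace IFSX

noncomputable def Bc : Set T1 := (fun x : ℝ => (x : T1)) '' BR

lemma BR_compact : IsCompact BR := by
  have hsub : BR ⊆ Icc (0:ℝ) 1 := by
    intro x hx
    obtain ⟨h1, h2⟩ := BR_subset hx
    exact ⟨by linarith, h2⟩
  exact isCompact_Icc.of_isClosed_subset BR_closed hsub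

lemma Bc_closed : IsClosed Bc :=
  (BR_compact.image (AddCircle.continuous_mk' 1)).isClosed

lemma Bc_nonempty : Bc.Nonempty := ⟨_, ⟨1/16, BR_mem_base, rfl⟩⟩

lemma Bc_ne : (((1:ℝ)/32 : ℝ) : T1) ∉ Bc := by
  rintro ⟨x, hx, hq⟩
  obtain ⟨h1, h2⟩ := BR_subset hx
  rw [QuotientAddGroup.eq] at hq
  obtain ⟨n, hn⟩ := AddSubgroup.mem_zmultiples_iff.mp hq
  have hn' : (n:ℝ) = -x + 1/32 := by rw [← hn]; simp
  have hlt : (-1:ℤ) < n ∧ n < 0 := by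
    constructor <;> [exact_mod_cast (by linarith : (-1:ℝ) < (n:ℝ));
      exact_mod_cast (by linarith : ((n:ℝ)) < 0)]
  omega

lemma rot_preimage : (⇑rot) ⁻¹' Bc ⊆ Bc := by
  intro q hq
  obtain ⟨x, hx, hqx⟩ := hq
  have hqx' : ((x : ℝ) : T1) = q + (((1:ℝ)/8 : ℝ) : T1) := hqx
  have hq' : q = ((x - 1/8 : ℝ) : T1) := by
    have h1 : ((x : ℝ) : T1) = ((x - 1/8 : ℝ) : T1) + (((1:ℝ)/8 : ℝ) : T1) := by
      rw [← coe_T1_add]; exact coe_congr (by ring)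
    rw [h1] at hqx'
    exact (add_right_cancel hqx'.symm)
  rcases BR_rot' hx with h | h
  · exact ⟨x - 1/8, h, hq'.symm⟩
  · refine ⟨x - 1/8 + 1, h, ?_⟩
    show ((x - 1/8 + 1 : ℝ) : T1) = q
    rw [hq']
    rw [coe_T1_add]
    have h0 : (((1:ℝ)) : T1) = 0 := by simpa using int_coe_zero 1
    rw [h0, add_zero]

lemma fH_preimage : (⇑homeoH.symm) ⁻¹' Bc ⊆ Bc := by
  intro q hq
  obtain ⟨x, hx, hqx⟩ := hq
  have hq' : q = Hbar ((x : ℝ) : T1) := by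
    have h0 : ((x : ℝ) : T1) = homeoH.symm q := hqx
    have h1 : homeoH (homeoH.symm q) = q := homeoH.apply_symm_apply q
    rw [← h0] at h1
    exact h1.symm
  rw [hq', Hbar_coe]
  exact ⟨H x, H_mem_BR hx, rfl⟩

lemma Fmodel_zero : Fmodel 0 = ⇑rot := rfl
lemma Fmodel_one : Fmodel 1 = ⇑homeoH.symm := rfl

lemma Fmodel_preimage (i : Fin 2) : (Fmodel i) ⁻¹' Bc ⊆ Bc := by
  fin_cases i
  · exact rot_preimage
  · exact fH_preimage

lemma Fmodel_surjective (i : Fin 2) : Function.Surjective (Fmodel i) := by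
  fin_cases i
  · exact rot.surjective
  · exact homeoH.symm.surjective

lemma Fmodel_isHomeomorph (i : Fin 2) : IsHomeomorph (Fmodel i) := by
  fin_cases i
  · exact rot.isHomeomorph
  · exact homeoH.symm.isHomeomorph

lemma foldr_preimage (l : List (Fin 2)) :
    ((l.map Fmodel).foldr (· ∘ ·) id) ⁻¹' Bc ⊆ Bc ∧
      Function.Surjective ((l.map Fmodel).foldr (· ∘ ·) id) := by
  induction l with
  | nil => exact ⟨by simp, Function.surjective_id⟩
  | cons a l ih =>
    obtain ⟨ih1, ih2⟩ := ih
    constructor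
    · intro q hq
      simp only [List.map_cons, List.foldr_cons] at hq
      have : q ∈ ((l.map Fmodel).foldr (· ∘ ·) id) ⁻¹' ((Fmodel a) ⁻¹' Bc) := hq
      exact ih1 (preimage_mono (Fmodel_preimage a) this)
    · simp only [List.map_cons, List.foldr_cons]
      exact (Fmodel_surjective a).comp ih2

/-- The homeomorphism to the standard circle. -/
noncomputable def eC : T1 ≃ₜ Circle := AddCircle.homeomorphCircle one_ne_zero

/-- The final IFS on the circle. -/
noncomputable def Ffin : Fin 2 → Circle → Circle := fun i => ⇑eC ∘ Fmodel i ∘ ⇑eC.symm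

lemma Ffin_isHomeomorph (i : Fin 2) : IsHomeomorph (Ffin i) :=
  (eC.isHomeomorph.comp (Fmodel_isHomeomorph i)).comp eC.symm.isHomeomorph

lemma Ffin_forward : ForwardMinimal Ffin := by
  intro B hne hcl hinv
  have hA : (⇑eC ⁻¹' B) = univ := by
    apply model_forward
    · obtain ⟨b, hb⟩ := hne
      exact ⟨eC.symm b, by simp [hb]⟩
    · exact hcl.preimage eC.continuous
    · rintro q ⟨a, ha, rfl⟩
      have : Ffin 0 (eC a) ∈ B := hinv 0 ⟨eC a, ha, rfl⟩
      simpa [Ffin, Fmodel_zero] using this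
    · rintro q ⟨a, ha, rfl⟩
      have : Ffin 1 (eC a) ∈ B := hinv 1 ⟨eC a, ha, rfl⟩
      simpa [Ffin, Fmodel_one] using this
  ext y
  simp only [mem_univ, iff_true]
  have : eC.symm y ∈ (⇑eC ⁻¹' B) := by rw [hA]; trivial
  simpa using this

lemma conj_foldr (l : List (Fin 2)) :
    (l.map Ffin).foldr (· ∘ ·) id = ⇑eC ∘ ((l.map Fmodel).foldr (· ∘ ·) id) ∘ ⇑eC.symm := by
  induction l with
  | nil => funext y; simp
  | cons a l ih =>
    funext y
    simp only [List.map_cons, List.foldr_cons, Function.comp_apply, ih, Ffin]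
    simp

lemma Ffin_not_backward : ¬ BackwardMinimal Ffin := by
  intro hBM
  set B' : Set Circle := ⇑eC.symm ⁻¹' Bc with hB'
  have hBuniv : B' = univ := by
    apply hBM
    · obtain ⟨q, hq⟩ := Bc_nonempty
      exact ⟨eC q, by simp [hB', hq]⟩
    · exact Bc_closed.preimage eC.symm.continuous
    · rintro g ⟨l, hl, rfl⟩
      obtain ⟨hpre, hsurj⟩ := foldr_preimage l
      rw [conj_foldr l]
      constructor
      · obtain ⟨q, hq⟩ := Bc_nonempty
        obtain ⟨p, hp⟩ := hsurj q
        refine ⟨eC p, ?_⟩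
        simp [hB', hp, hq]
      · intro x hx
        simp only [hB', mem_preimage, Function.comp_apply] at hx ⊢
        have : eC.symm x ∈ ((l.map Fmodel).foldr (· ∘ ·) id) ⁻¹' Bc := by
          simpa using hx
        exact hpre this
  have : (((1:ℝ)/32 : ℝ) : T1) ∈ Bc := by
    have : eC (((1:ℝ)/32 : ℝ) : T1) ∈ B' := by rw [hBuniv]; trivial
    simpa [hB'] using this
  exact Bc_ne this

theorem main :
    ∃ (k : ℕ) (f : Fin k → Circle → Circle),
      0 < k ∧ (∀ i, IsHomeomorph (f i)) ∧ ForwardMinimal f ∧ ¬ BackwardMinimal f :=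
  ⟨2, Ffin, by norm_num, Ffin_isHomeomorph, Ffin_forward, Ffin_not_backward⟩

end IFSX

end IFSXdev

theorem exists_forward_minimal_not_backward_minimal_circle_IFS :
    ∃ (k : ℕ) (f : Fin k → Circle → Circle),
      0 < k ∧ (∀ i, IsHomeomorph (f i)) ∧ ForwardMinimal f ∧ ¬ BackwardMinimal f :=
  IFSX.main
end

section
/- Let X be a Hausdorff topological space, f₁,…,f_k : X → X continuous maps, and let A be a pointwise attractor for the IFS which is contractible. Then A satisfies the deterministic chaos game: for every disjunctive sequence ω ∈ Ω and every x ∈ B_p(A), A ⊆ closure(O⁺_ω(x)). -/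
open Set Filter Topology

set_option linter.unusedSectionVars false

namespace ChaosGameAux

variable {X : Type*} {k : ℕ}

/-- Composition of folds corresponding to list append. -/
lemma fold_append_apply (f : Fin k → X → X) (l₁ l₂ : List (Fin k)) (z : X) :
    (((l₁ ++ l₂).map f).foldr (· ∘ ·) id) z
      = ((l₁.map f).foldr (· ∘ ·) id) (((l₂.map f).foldr (· ∘ ·) id) z) := by
  induction l₁ with
  | nil => rfl
  | cons i t ih =>
      simp only [List.cons_append, List.map_cons, List.foldr_cons, Function.comp_apply, ih]

variable [TopologicalSpace X]

lemma fold_cont {f : Fin k → X → X} (hf : ∀ i, Continuous (f i)) (l : List (Fin k)) :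
    Continuous ((l.map f).foldr (· ∘ ·) id) := by
  induction l with
  | nil => exact continuous_id
  | cons i t ih => exact (hf i).comp ih

lemma fibIter_cont {f : Fin k → X → X} (hf : ∀ i, Continuous (f i)) (α : ℕ → Fin k) (n : ℕ) :
    Continuous (FibIter f α n) := by
  induction n with
  | zero => exact continuous_id
  | succ n ih => exact (hf (α n)).comp ih

lemma fib_mem_iterate (f : Fin k → X → X) (ω : ℕ → Fin k) (x : X) (m : ℕ) :
    FibIter f ω m x ∈ (Hutch f)^[m] ({x} : Set X) := by
  induction m with
  | zero => exact rfl
  | succ m ih =>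
      rw [Function.iterate_succ_apply']
      exact Set.mem_iUnion.mpr ⟨ω m, Set.mem_image_of_mem _ ih⟩

/-- Every element of the `n`-th Hutchinson iterate of a singleton is a word applied
to the point. -/
lemma exists_word_of_mem_iterate (f : Fin k → X → X) (b : X) :
    ∀ (n : ℕ) (z : X), z ∈ (Hutch f)^[n] ({b} : Set X) →
      ∃ l : List (Fin k), l.length = n ∧ ((l.map f).foldr (· ∘ ·) id) b = z := by
  intro n
  induction n with
  | zero => intro z hz; exact ⟨[], rfl, hz.symm⟩
  | succ n ih =>
      intro z hz
      rw [Function.iterate_succ_apply'] at hz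
      obtain ⟨i, t, ht, rfl⟩ := by
        simpa only [Hutch, Set.mem_iUnion, Set.mem_image] using hz
      obtain ⟨l, hlen, hfold⟩ := ih t ht
      exact ⟨i :: l, by simp [hlen], by simp only [List.map_cons, List.foldr_cons,
        Function.comp_apply, hfold]⟩

lemma fib_add (f : Fin k → X → X) (ω α : ℕ → Fin k) (x : X) (m : ℕ) :
    ∀ n : ℕ, (∀ j < n, ω (m + j) = α j) →
      FibIter f ω (m + n) x = FibIter f α n (FibIter f ω m x) := by
  intro n
  induction n with
  | zero => intro _; rfl
  | succ n ih =>
      intro h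
      have h1 : FibIter f ω (m + (n + 1)) x = f (ω (m + n)) (FibIter f ω (m + n) x) := rfl
      rw [h1, h (n) (Nat.lt_succ_self n), ih (fun j hj => h j (Nat.lt_succ_of_lt hj))]
      rfl

lemma fold_eq_fib (f : Fin k → X → X) (d : Fin k) :
    ∀ (l : List (Fin k)) (α : ℕ → Fin k),
      (∀ j < l.length, α j = l.getD (l.length - 1 - j) d) →
      ∀ z : X, FibIter f α l.length z = ((l.map f).foldr (· ∘ ·) id) z := by
  intro l
  induction l with
  | nil => intro α _ z; rfl
  | cons i t ih =>
      intro α h z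
      have h1 : α t.length = i := by
        have := h t.length (by simp)
        simpa using this
      have h2 : ∀ j < t.length, α j = t.getD (t.length - 1 - j) d := by
        intro j hj
        have := h j (by simp; omega)
        have e : (i :: t).length - 1 - j = (t.length - 1 - j) + 1 := by
          simp only [List.length_cons]; omega
        rwa [e, List.getD_cons_succ] at this
      have h3 : FibIter f α (t.length + 1) z = f (α t.length) (FibIter f α t.length z) := rfl
      calc FibIter f α (i :: t).length z = f (α t.length) (FibIter f α t.length z) := h3
        _ = f i (((t.map f).foldr (· ∘ ·) id) z) := by rw [h1, ih α h2 z]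
        _ = (((i :: t).map f).foldr (· ∘ ·) id) z := rfl

lemma shift_iter {k : ℕ} (ω : ℕ → Fin k) : ∀ (i t : ℕ), (shiftSeq^[i] ω) t = ω (t + i) := by
  intro i
  induction i generalizing ω with
  | zero => intro t; rfl
  | succ i ih =>
      intro t
      rw [Function.iterate_succ_apply, ih (shiftSeq ω) t]
      rfl

/-- From disjunctivity: any prefix pattern occurs in `ω` beyond any given position. -/
lemma disj_match {k : ℕ} {ω : ℕ → Fin k} (hω : Disjunctive ω) (α : ℕ → Fin k) (n N : ℕ) :
    ∃ m ≥ N, ∀ j < n, ω (m + j) = α j := by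
  classical
  set S : Set (ℕ → Fin k) := ⋂ j ∈ Finset.range n, {γ : ℕ → Fin k | γ (N + j) = α j} with hS
  have hSo : IsOpen S := by
    refine isOpen_biInter_finset fun j _ => ?_
    have e : {γ : ℕ → Fin k | γ (N + j) = α j}
        = (fun γ : ℕ → Fin k => γ (N + j)) ⁻¹' {α j} := rfl
    rw [e]
    exact (continuous_apply (N + j)).isOpen_preimage _ (isOpen_discrete _)
  have hSne : S.Nonempty := by
    refine ⟨fun i => α (i - N), ?_⟩
    simp only [hS, Set.mem_iInter, Set.mem_setOf_eq]
    intro j _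
    congr 1
    omega
  obtain ⟨γ, ⟨i, rfl⟩, hγ⟩ := hω.exists_mem_open hSo hSne
  refine ⟨N + i, Nat.le_add_right _ _, fun j hj => ?_⟩
  have := Set.mem_iInter₂.mp hγ j (Finset.mem_range.mpr hj)
  simp only [Set.mem_setOf_eq, shift_iter] at this
  have e : N + i + j = N + j + i := by omega
  rw [e]; exact this

/-- `z` is a cluster point of the fiberwise orbit of `x` along times at which `ω` matches
arbitrarily long prefixes of `α`. -/
def Pcl (f : Fin k → X → X) (ω : ℕ → Fin k) (x z : X) (α : ℕ → Fin k) : Prop :=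
  ∀ O : Set X, IsOpen O → z ∈ O → ∀ n N : ℕ,
    ∃ m, N ≤ m ∧ FibIter f ω m x ∈ O ∧ ∀ j < n, ω (m + j) = α j

lemma eventually_mem {f : Fin k → X → X} {ω : ℕ → Fin k} {x : X} {A : Set X}
    (hAne : A.Nonempty) (hx : VTendsto (fun n => (Hutch f)^[n] {x}) A)
    {N : Set X} (hNo : IsOpen N) (hAN : A ⊆ N) :
    ∃ n₀, ∀ m ≥ n₀, FibIter f ω m x ∈ N := by
  obtain ⟨a₀, ha₀⟩ := hAne
  obtain ⟨n₀, h⟩ := hx N N hNo hAN hNo ⟨a₀, hAN ha₀, ha₀⟩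
  exact ⟨n₀, fun m hm => (h m hm).1 (fib_mem_iterate f ω x m)⟩

lemma exists_Pcl {f : Fin k → X → X} {ω : ℕ → Fin k} {x : X} {A : Set X}
    (hAcomp : IsCompact A) (hAne : A.Nonempty)
    (hx : VTendsto (fun n => (Hutch f)^[n] {x}) A)
    (hω : Disjunctive ω) (α : ℕ → Fin k) :
    ∃ z ∈ A, Pcl f ω x z α := by
  classical
  by_contra hcon
  push_neg at hcon
  have hcon' : ∀ z : A, ∃ O : Set X, IsOpen O ∧ (z : X) ∈ O ∧ ∃ n N : ℕ,
      ∀ m, N ≤ m → FibIter f ω m x ∈ O → ∃ j, j < n ∧ ω (m + j) ≠ α j := by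
    intro z
    have h1 := hcon z z.2
    unfold Pcl at h1
    push_neg at h1
    exact h1
  choose O hOop hzO n N hbad using hcon'
  obtain ⟨t, ht⟩ := hAcomp.elim_finite_subcover O hOop
    (fun b hb => Set.mem_iUnion.mpr ⟨⟨b, hb⟩, hzO ⟨b, hb⟩⟩)
  have hUo : IsOpen (⋃ z ∈ t, O z) := isOpen_biUnion fun z _ => hOop z
  obtain ⟨n₀, hn₀⟩ := eventually_mem hAne hx hUo ht
  obtain ⟨m, hm, hmatch⟩ := disj_match hω α (t.sup n) (max (t.sup N) n₀)
  have hymem : FibIter f ω m x ∈ ⋃ z ∈ t, O z :=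
    hn₀ m (le_trans (le_max_right _ _) hm)
  obtain ⟨z, hzt, hymz⟩ := Set.mem_iUnion₂.mp hymem
  obtain ⟨j, hj, hne⟩ := hbad z m
    (le_trans (le_trans (Finset.le_sup hzt) (le_max_left _ _)) hm) hymz
  exact hne (hmatch j (lt_of_lt_of_le hj (Finset.le_sup hzt)))

lemma Pcl_mem_A [T2Space X] {f : Fin k → X → X} {ω : ℕ → Fin k} {x z : X} {A : Set X}
    (hAcomp : IsCompact A) (hAne : A.Nonempty)
    (hx : VTendsto (fun n => (Hutch f)^[n] {x}) A) {α : ℕ → Fin k}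
    (hP : Pcl f ω x z α) : z ∈ A := by
  by_contra hz
  have hsep : SeparatedNhds ({z} : Set X) A :=
    SeparatedNhds.of_isCompact_isCompact isCompact_singleton hAcomp
      (Set.disjoint_singleton_left.mpr hz)
  obtain ⟨Oz, NA, hOzo, hNAo, hzOz, hANA, hdis⟩ := hsep
  obtain ⟨n₀, hn₀⟩ := eventually_mem hAne hx hNAo hANA
  obtain ⟨m, hm, hmO, -⟩ := hP Oz hOzo (hzOz rfl) 0 n₀
  exact Set.disjoint_left.mp hdis hmO (hn₀ m hm)

end ChaosGameAux

theorem contractible_attractor_deterministic_chaos_game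
    {X : Type*} [TopologicalSpace X] [T2Space X] {k : ℕ}
    (f : Fin k → X → X) (hf : ∀ i, Continuous (f i))
    (A : Set X) (hA : IsPointwiseAttractor f A)
    (hc : ContractibleAttractor f A) :
    ∀ ω : ℕ → Fin k, Disjunctive ω → ∀ x ∈ BasinP f A, A ⊆ closure (Oplus f ω x) := by
  classical
  intro ω hω x hx
  obtain ⟨hAcomp, hAne, U, hUopen, hAU, hUB⟩ := hA
  have hxV : VTendsto (fun n => (Hutch f)^[n] {x}) A := hx
  intro a ha
  rw [mem_closure_iff]
  intro V hVopen haV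
  have hVA : (V ∩ A).Nonempty := ⟨a, haV, ha⟩
  suffices h : ∃ m, 1 ≤ m ∧ FibIter f ω m x ∈ V by
    obtain ⟨m, hm1, hmV⟩ := h
    exact ⟨FibIter f ω m x, hmV, ⟨m, hm1, rfl⟩⟩
  set L : Set X := {z | ∃ α : ℕ → Fin k, ChaosGameAux.Pcl f ω x z α} with hLdef
  have hLA : L ⊆ A := by
    rintro z ⟨α, hP⟩
    exact ChaosGameAux.Pcl_mem_A hAcomp hAne hxV hP
  by_cases hacl : a ∈ closure L
  · obtain ⟨z, hzV, hzL⟩ := mem_closure_iff.mp hacl V hVopen haV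
    obtain ⟨α, hP⟩ := hzL
    obtain ⟨m, hm1, hmV, -⟩ := hP V hVopen hzV 0 1
    exact ⟨m, hm1, hmV⟩
  · have hclA : closure L ⊆ A := hAcomp.isClosed.closure_subset_iff.mpr hLA
    have hclcomp : IsCompact (closure L) := hAcomp.of_isClosed_subset isClosed_closure hclA
    have hclne : closure L ≠ A := fun h => hacl (h ▸ ha)
    set 𝒰 : Set (Set X) :=
      {O | ∃ l : List (Fin k), O = ((l.map f).foldr (· ∘ ·) id) ⁻¹' V} with h𝒰def
    have h𝒰o : ∀ O ∈ 𝒰, IsOpen O := by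
      rintro O ⟨l, rfl⟩
      exact (ChaosGameAux.fold_cont hf l).isOpen_preimage _ hVopen
    have h𝒰c : A ⊆ ⋃₀ 𝒰 := by
      intro b hb
      have hbB : VTendsto (fun n => (Hutch f)^[n] {b}) A := hUB (hAU hb)
      obtain ⟨n₀, hn₀⟩ := hbB Set.univ V isOpen_univ (Set.subset_univ A) hVopen hVA
      obtain ⟨-, z, hz1, hz2⟩ := hn₀ n₀ le_rfl
      obtain ⟨l, -, hfold⟩ := ChaosGameAux.exists_word_of_mem_iterate f b n₀ z hz1
      refine ⟨_, ⟨l, rfl⟩, ?_⟩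
      rw [Set.mem_preimage, hfold]
      exact hz2
    obtain ⟨g, hgΓ, O, hO𝒰, hgK⟩ := hc (closure L) hclA hclcomp hclne 𝒰 h𝒰o h𝒰c
    obtain ⟨l₁, hl₁, rfl⟩ := hgΓ
    obtain ⟨l₂, rfl⟩ := hO𝒰
    set w := l₂ ++ l₁ with hwdef
    have hwV : ∀ z ∈ closure L, ((w.map f).foldr (· ∘ ·) id) z ∈ V := by
      intro z hz
      rw [hwdef, ChaosGameAux.fold_append_apply]
      exact hgK (Set.mem_image_of_mem _ hz)
    set α : ℕ → Fin k := fun j => w.getD (w.length - 1 - j) (ω 0) with hαdef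
    obtain ⟨z, hzA, hzP⟩ := ChaosGameAux.exists_Pcl hAcomp hAne hxV hω α
    have hzL : z ∈ closure L := subset_closure ⟨α, hzP⟩
    have hkey : FibIter f α w.length z ∈ V := by
      rw [ChaosGameAux.fold_eq_fib f (ω 0) w α (fun j _ => rfl) z]
      exact hwV z hzL
    obtain ⟨m, hm1, hmO, hmatch⟩ := hzP ((FibIter f α w.length) ⁻¹' V)
      ((ChaosGameAux.fibIter_cont hf α w.length).isOpen_preimage _ hVopen) hkey w.length 1
    refine ⟨m + w.length, le_trans hm1 (Nat.le_add_right _ _), ?_⟩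
    rw [ChaosGameAux.fib_add f ω α x m w.length hmatch]
    exact hmO
end

section
/- Let X be a Hausdorff topological space, A ⊆ X a nonempty compact set, and (Aₙ) a sequence of nonempty compact subsets of X that converges to A in the Vietoris sense. Then A = ⋂_{m≥1} closure(⋃_{n≥m} Aₙ). -/
open Set Filter Topology

theorem vietoris_limit_eq_iInter_closure_tails
    {X : Type*} [TopologicalSpace X] [T2Space X]
    (A : Set X) (hA : IsCompact A) (hAne : A.Nonempty)
    (B : ℕ → Set X) (hB : ∀ n, IsCompact (B n)) (hBne : ∀ n, (B n).Nonempty)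
    (hconv : VTendsto B A) :
    A = ⋂ m, closure (⋃ n ∈ Set.Ici m, B n) := by
  apply Set.Subset.antisymm
  · intro a ha
    refine Set.mem_iInter.2 fun m => ?_
    by_contra hmem
    have hV : IsOpen (closure (⋃ n ∈ Set.Ici m, B n))ᶜ := isClosed_closure.isOpen_compl
    obtain ⟨n₀, hn₀⟩ := hconv Set.univ _ isOpen_univ (Set.subset_univ A) hV ⟨a, hmem, ha⟩
    obtain ⟨y, hy1, hy2⟩ := (hn₀ (max m n₀) (le_max_right _ _)).2
    exact hy2 (subset_closure (Set.mem_biUnion (le_max_left m n₀) hy1))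
  · intro x hx
    by_contra hxA
    obtain ⟨U, V, hU, hV, hAU, hxV, hdisj⟩ := hA.separation_of_notMem hxA
    obtain ⟨a, ha⟩ := hAne
    obtain ⟨n₀, hn₀⟩ := hconv U Set.univ hU hAU isOpen_univ ⟨a, Set.mem_univ a, ha⟩
    have hsub : (⋃ n ∈ Set.Ici n₀, B n) ⊆ Vᶜ := by
      intro y hy
      obtain ⟨n, hn, hyn⟩ := Set.mem_iUnion₂.mp hy
      exact fun hyV => hdisj.ne_of_mem ((hn₀ n hn).1 hyn) hyV rfl
    have hx' := Set.mem_iInter.1 hx n₀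
    have : x ∈ Vᶜ := closure_minimal hsub (hV.isClosed_compl) hx'
    exact this hxV
end
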